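/- arXiv:1710.11330 — 6 statements merged into one kernel-verified Lean document; each statement's English description precedes it below -/
import Mathlib

section
/- Let W be a finite subset of Z_+^d, and for each u in W let n(u) ≥ 1 be an integer. Then there exists a subset W' ⊆ W such that the translated cubes {u + S_{n(u)} : u ∈ W'} are pairwise disjoint, and 3^d · Σ_{u ∈ W'} |S_{n(u)}| ≥ |W|. -/
/-! Vitali's greedy selection: choosing cubes in decreasing order of size, keeping each one that
misses all cubes kept so far, every cube of `W` meets a kept cube at least half as large
(Mathlib's `Vitali.exists_disjoint_subfamily_covering_enlargement` with `τ = 2`). The corners of the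
cubes of side at most `2 n(u)` meeting `u + S_{n(u)}` fill at most `(3 n(u))^d` points, so each
kept cube accounts for at most `3^d |S_{n(u)}|` elements of `W`. -/

/-- The discrete hypercube `S_n = {0,...,n-1}^d` in `ℤ₊^d` (modeled as `Fin d → ℕ`). -/
def cubeN (d n : ℕ) : Finset (Fin d → ℕ) := Fintype.piFinset fun _ => Finset.range n

/-- The translate `u + S_n` of the cube. -/
def transCube {d : ℕ} (u : Fin d → ℕ) (n : ℕ) : Finset (Fin d → ℕ) :=
  (cubeN d n).image fun x => u + x

open Finset

theorem Finset.exists_disjoint_subfamily_covering_two_mul {ι α : Type*} (W : Finset ι)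
    (s : ι → Finset α) (r : ι → ℕ) (hne : ∀ u ∈ W, (s u).Nonempty) :
    ∃ W' ⊆ W, (W' : Set ι).PairwiseDisjoint s ∧
      ∀ v ∈ W, ∃ u ∈ W', r v ≤ 2 * r u ∧ ¬Disjoint (s v) (s u) := by
  obtain ⟨U, hUW, hdisj, hcover⟩ := Vitali.exists_disjoint_subfamily_covering_enlargement
    (fun u => (s u : Set α)) W (fun u => (r u : ℝ)) 2 one_lt_two (fun _ _ => Nat.cast_nonneg _)
    (W.sup r : ℕ) (fun u hu => Nat.cast_le.mpr (le_sup hu)) (fun u hu => (hne u hu).to_set)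
  obtain ⟨W', rfl⟩ := ((W.finite_toSet).subset hUW).exists_finset_coe
  refine ⟨W', coe_subset.mp hUW, fun u hu v hv huv => disjoint_coe.mp (hdisj hu hv huv), ?_⟩
  intro v hv
  obtain ⟨u, hu, hmeet, hle⟩ := hcover v hv
  refine ⟨u, hu, by exact_mod_cast hle, ?_⟩
  rw [← disjoint_coe, Set.not_disjoint_iff_nonempty_inter]
  exact hmeet

theorem card_cubeN (d m : ℕ) : #(cubeN d m) = m ^ d := by
  simp [cubeN]

theorem mem_transCube {d m : ℕ} {u x : Fin d → ℕ} :
    x ∈ transCube u m ↔ ∀ i, u i ≤ x i ∧ x i < u i + m := by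
  simp only [transCube, cubeN, mem_image, Fintype.mem_piFinset, mem_range]
  constructor
  · rintro ⟨y, hy, rfl⟩ i
    simp only [Pi.add_apply]
    have := hy i
    omega
  · intro h
    refine ⟨x - u, fun i => ?_, ?_⟩
    · simp only [Pi.sub_apply]; have := h i; omega
    · ext i; simp only [Pi.add_apply, Pi.sub_apply]; have := h i; omega

theorem transCube_nonempty {d m : ℕ} (u : Fin d → ℕ) (hm : 0 < m) : (transCube u m).Nonempty :=
  ⟨u, mem_transCube.mpr fun _ => ⟨le_rfl, by omega⟩⟩

theorem card_filter_not_disjoint_transCube_le {d m : ℕ} (u : Fin d → ℕ) (n : (Fin d → ℕ) → ℕ)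
    (V : Finset (Fin d → ℕ)) :
    #{v ∈ V | n v ≤ 2 * m ∧ ¬Disjoint (transCube v (n v)) (transCube u m)} ≤ 3 ^ d * m ^ d := by
  -- a cube of side at most `2 * m` meeting `u + S_m` has its corner in a box of side `3 * m - 1`
  have hbox : {v ∈ V | n v ≤ 2 * m ∧ ¬Disjoint (transCube v (n v)) (transCube u m)} ⊆
      Fintype.piFinset fun i => Ico (u i + 1 - 2 * m) (u i + m) := by
    intro v hv
    obtain ⟨-, hn, hmeet⟩ := mem_filter.mp hv
    obtain ⟨x, hxv, hxu⟩ := not_disjoint_iff.mp hmeet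
    rw [mem_transCube] at hxv hxu
    refine Fintype.mem_piFinset.mpr fun i => mem_Ico.mpr ?_
    have := hxv i; have := hxu i
    omega
  calc _ ≤ #(Fintype.piFinset fun i => Ico (u i + 1 - 2 * m) (u i + m)) := card_le_card hbox
    _ ≤ ∏ _ : Fin d, 3 * m := by
      rw [Fintype.card_piFinset]
      exact prod_le_prod' fun i _ => by rw [Nat.card_Ico]; omega
    _ = 3 ^ d * m ^ d := by rw [prod_const, card_univ, Fintype.card_fin, mul_pow]

/-- **Covering lemma** (Lemma 3.1 of Akcoglu–Krengel): given a finite set `W ⊆ ℤ₊^d`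
and integers `n(u) ≥ 1` for `u ∈ W`, there is `W' ⊆ W` such that the translated cubes
`u + S_{n(u)}`, `u ∈ W'`, are pairwise disjoint and `3^d · Σ_{u∈W'} |S_{n(u)}| ≥ |W|`. -/
theorem covering_lemma (d : ℕ) (W : Finset (Fin d → ℕ)) (n : (Fin d → ℕ) → ℕ)
    (hn : ∀ u ∈ W, 1 ≤ n u) :
    ∃ W' ⊆ W,
      (∀ u ∈ W', ∀ v ∈ W', u ≠ v → Disjoint (transCube u (n u)) (transCube v (n v))) ∧
      W.card ≤ 3 ^ d * ∑ u ∈ W', (cubeN d (n u)).card := by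
  obtain ⟨W', hW'W, hdisj, hcover⟩ := W.exists_disjoint_subfamily_covering_two_mul
    (fun u => transCube u (n u)) n fun u hu => transCube_nonempty u (hn u hu)
  refine ⟨W', hW'W, fun u hu v hv huv => hdisj hu hv huv, ?_⟩
  let B u := {v ∈ W | n v ≤ 2 * n u ∧ ¬Disjoint (transCube v (n v)) (transCube u (n u))}
  have hW : W ⊆ W'.biUnion B := by
    intro v hv
    obtain ⟨u, hu, hle, hmeet⟩ := hcover v hv
    exact mem_biUnion.mpr ⟨u, hu, mem_filter.mpr ⟨hv, hle, hmeet⟩⟩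
  calc #W ≤ ∑ u ∈ W', #(B u) := (card_le_card hW).trans card_biUnion_le
    _ ≤ ∑ u ∈ W', 3 ^ d * n u ^ d :=
        sum_le_sum fun u _ => card_filter_not_disjoint_transCube_le u n W
    _ = 3 ^ d * ∑ u ∈ W', #(cubeN d (n u)) := by simp only [card_cubeN, mul_sum]
end

section
/- Let F be an almost superadditive random process with finite time constant γ̃(F) = limsup_{n→∞} (1/|S_n|) E[F_{S_n}]. Then the limit lim_{n→∞} (1/|S_n|) E[F_{S_n}] exists and equals γ̃(F). -/
open MeasureTheory Filter

/-- Adjacency in `ℤ₊^d`: `x ∼ y` iff their `l¹`-distance is 1. -/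
def adjN {d : ℕ} (x y : Fin d → ℕ) : Prop := (∑ i, ((x i : ℤ) - (y i : ℤ)).natAbs) = 1

/-- A box in `ℤ₊^d`: a product of intervals `[aᵢ, bᵢ)` with `aᵢ < bᵢ`. -/
def IsBoxN {d : ℕ} (B : Finset (Fin d → ℕ)) : Prop :=
  ∃ a b : Fin d → ℕ, (∀ i, a i < b i) ∧ B = Fintype.piFinset fun i => Finset.Ico (a i) (b i)

/-- The inner boundary `∂B = {x ∈ B : ∃ y ∉ B, x ∼ y}`. -/
noncomputable def ibdN {d : ℕ} (B : Finset (Fin d → ℕ)) : Finset (Fin d → ℕ) :=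
  @Finset.filter _ (fun x => ∃ y, y ∉ B ∧ adjN x y) (Classical.decPred _) B

/-- An almost superadditive random process `F = (F_B)` indexed by boxes of `ℤ₊^d`,
relative to a measure-preserving semigroup `(τ_u)` and with defect random variable `A`. -/
structure AlmostSuperadditive {d : ℕ} {Ω : Type*} [MeasurableSpace Ω] (μ : Measure Ω)
    (τ : (Fin d → ℕ) → Ω → Ω) (F : Finset (Fin d → ℕ) → Ω → ℝ) (A : Ω → ℝ) : Prop where
  meas : ∀ u, MeasurePreserving (τ u) μ μ
  semigroup : ∀ u v, τ (u + v) = τ u ∘ τ v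
  int : ∀ B, IsBoxN B → Integrable (F B) μ
  shift : ∀ (u : Fin d → ℕ) (B : Finset (Fin d → ℕ)), IsBoxN B →
    F (B.image fun x => u + x) = (F B) ∘ (τ u)
  Anonneg : ∀ ω, 0 ≤ A ω
  Aint : Integrable A μ
  superadd : ∀ (k : ℕ) (Bs : Fin k → Finset (Fin d → ℕ)),
    (∀ i, IsBoxN (Bs i)) →
    (∀ i j, i ≠ j → Disjoint (Bs i) (Bs j)) →
    IsBoxN (Finset.univ.biUnion Bs) →
    ∀ ω, (∑ i, F (Bs i) ω) - A ω * (∑ i, ((ibdN (Bs i)).card : ℝ))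
      ≤ F (Finset.univ.biUnion Bs) ω

/-- The normalized expectations `n ↦ |S_n|⁻¹ E[F_{S_n}]`. -/
noncomputable def avgSeq {d : ℕ} {Ω : Type*} [MeasurableSpace Ω] (μ : Measure Ω)
    (F : Finset (Fin d → ℕ) → Ω → ℝ) (n : ℕ) : ℝ :=
  (∫ ω, F (cubeN d n) ω ∂μ) / (n : ℝ) ^ d

/-- The time constant `γ̃(F) = limsup_n |S_n|⁻¹ E[F_{S_n}]`. -/
noncomputable def timeConst {d : ℕ} {Ω : Type*} [MeasurableSpace Ω] (μ : Measure Ω)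
    (F : Finset (Fin d → ℕ) → Ω → ℝ) : ℝ :=
  limsup (avgSeq μ F) atTop


/-!
Fix `m`. For `n ≥ m`, cut `S_n` into `(n / m)^d` cells, products of blocks of length `m` except
for the last block in each direction, whose length lies in `[m, 2m)`. By stationarity each regular
cell contributes `E[F_{S_m}]`, each of the at most `(n / m)^d - (n / m - 1)^d` irregular ones at
least a constant depending only on `m`, and the defect costs `E[A]` times the total boundary size,
`(n / m)^d · O(m^{d-1})`. Dividing by `n^d`, every accumulation point of the averages is at least
`|S_m|⁻¹ E[F_{S_m}] - O(E[A] / m)`; choosing `m` large with `|S_m|⁻¹ E[F_{S_m}]` close to the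
limsup shows that the liminf equals the limsup.
-/

open Finset Fintype Function Topology

section Boxes

variable {d : ℕ}

theorem isBoxN_cubeN {n : ℕ} (hn : 0 < n) : IsBoxN (cubeN d n) :=
  ⟨0, fun _ => n, fun _ => hn, by ext; simp [cubeN]⟩

theorem adjN.le_add_one {x y : Fin d → ℕ} (h : adjN x y) (i : Fin d) :
    x i ≤ y i + 1 ∧ y i ≤ x i + 1 := by
  have : ((x i : ℤ) - y i).natAbs ≤ 1 := by
    rw [← h]
    exact single_le_sum (f := fun j => ((x j : ℤ) - y j).natAbs) (by simp) (mem_univ i)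
  omega

theorem ibdN_piFinset_Ico_subset (a b : Fin d → ℕ) :
    ibdN (piFinset fun i => Ico (a i) (b i)) ⊆ univ.biUnion fun i =>
      {x ∈ piFinset fun i => Ico (a i) (b i) | x i = a i} ∪
        {x ∈ piFinset fun i => Ico (a i) (b i) | x i = b i - 1} := by
  classical
  intro x hx
  rw [ibdN, mem_filter] at hx
  obtain ⟨hxB, y, hyB, hxy⟩ := hx
  obtain ⟨i, hi⟩ : ∃ i, y i ∉ Ico (a i) (b i) := by
    simpa [Fintype.mem_piFinset] using hyB
  have hxi := Fintype.mem_piFinset.1 hxB i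
  have := hxy.le_add_one i
  simp only [mem_Ico] at hi hxi
  simp only [mem_biUnion, mem_univ, true_and, mem_union, mem_filter]
  exact ⟨i, (by omega : x i = a i ∨ x i = b i - 1).imp (⟨hxB, ·⟩) (⟨hxB, ·⟩)⟩

theorem card_ibdN_piFinset_Ico_le {a b : Fin d → ℕ} {M : ℕ} (h : ∀ i, b i - a i ≤ M) :
    #(ibdN (piFinset fun i => Ico (a i) (b i))) ≤ 2 * d * M ^ (d - 1) := by
  have hface : ∀ i c, #{x ∈ piFinset fun i => Ico (a i) (b i) | x i = c} ≤ M ^ (d - 1) := by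
    intro i c
    rw [card_filter_piFinset_eq (fun i => Ico (a i) (b i)) i c]
    split_ifs
    · calc ∏ j ∈ univ.erase i, #(Ico (a j) (b j))
          ≤ M ^ #(univ.erase i) := prod_le_pow_card _ _ _ fun j _ => by simpa using h j
        _ = M ^ (d - 1) := by simp
    · exact Nat.zero_le _
  calc #(ibdN (piFinset fun i => Ico (a i) (b i)))
      ≤ ∑ i : Fin d, (M ^ (d - 1) + M ^ (d - 1)) :=
        (card_le_card (ibdN_piFinset_Ico_subset a b)).trans <| card_biUnion_le.trans <|
          sum_le_sum fun i _ => (card_union_le _ _).trans (add_le_add (hface _ _) (hface _ _))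
    _ = 2 * d * M ^ (d - 1) := by
        simp only [sum_const, card_univ, Fintype.card_fin, smul_eq_mul]
        ring

end Boxes

namespace AlmostSuperadditive

variable {d : ℕ} {Ω : Type*} [MeasurableSpace Ω] {μ : Measure Ω} {τ : (Fin d → ℕ) → Ω → Ω}
  {F : Finset (Fin d → ℕ) → Ω → ℝ} {A : Ω → ℝ}

theorem integral_image_add (hF : AlmostSuperadditive μ τ F A) (u : Fin d → ℕ)
    {B : Finset (Fin d → ℕ)} (hB : IsBoxN B) :
    ∫ ω, F (B.image (u + ·)) ω ∂μ = ∫ ω, F B ω ∂μ := by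
  have hτ := hF.meas u
  rw [hF.shift u B hB, Function.comp_def, ← integral_map hτ.aemeasurable
    (by rw [hτ.map_eq]; exact (hF.int B hB).aestronglyMeasurable), hτ.map_eq]

theorem integral_defect_nonneg (hF : AlmostSuperadditive μ τ F A) : 0 ≤ ∫ ω, A ω ∂μ :=
  integral_nonneg hF.Anonneg

theorem sum_integral_sub_le {ι : Type*} [Fintype ι] (hF : AlmostSuperadditive μ τ F A)
    (B : ι → Finset (Fin d → ℕ)) (hB : ∀ i, IsBoxN (B i)) (hdisj : Pairwise (Disjoint on B))
    (hU : IsBoxN (univ.biUnion B)) :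
    ∑ i, ∫ ω, F (B i) ω ∂μ - (∫ ω, A ω ∂μ) * ∑ i, (#(ibdN (B i)) : ℝ)
      ≤ ∫ ω, F (univ.biUnion B) ω ∂μ := by
  set e := Fintype.equivFin ι
  have hUe : univ.biUnion (B ∘ e.symm) = univ.biUnion B := by
    ext x; simp [e.symm.exists_congr_left]
  have hsuper : ∀ ω, ∑ i, F (B i) ω - A ω * ∑ i, (#(ibdN (B i)) : ℝ) ≤ F (univ.biUnion B) ω := by
    intro ω
    have := hF.superadd _ (B ∘ e.symm) (fun _ => hB _)
      (fun _ _ hij => hdisj (e.symm.injective.ne hij)) (hUe ▸ hU) ω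
    simpa only [Function.comp_apply, e.symm.sum_comp (fun i => F (B i) ω),
      e.symm.sum_comp (fun i => (#(ibdN (B i)) : ℝ)), hUe] using this
  have hint : ∀ i ∈ (univ : Finset ι), Integrable (F (B i)) μ := fun i _ => hF.int _ (hB i)
  calc ∑ i, ∫ ω, F (B i) ω ∂μ - (∫ ω, A ω ∂μ) * ∑ i, (#(ibdN (B i)) : ℝ)
      = ∫ ω, (∑ i, F (B i) ω - A ω * ∑ i, (#(ibdN (B i)) : ℝ)) ∂μ := by
        rw [integral_sub (integrable_finsetSum _ hint) (hF.Aint.mul_const _),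
          integral_finsetSum _ hint, integral_mul_const]
    _ ≤ ∫ ω, F (univ.biUnion B) ω ∂μ :=
        integral_mono ((integrable_finsetSum _ hint).sub (hF.Aint.mul_const _))
          (hF.int _ hU) hsuper

end AlmostSuperadditive

section BlockPartition

variable {d m n : ℕ}

/-- Length of the `j`-th of the `n / m` consecutive blocks cutting `[0, n)`; the last one absorbs
the remainder `n % m`. -/
def blockLen (m n j : ℕ) : ℕ := if j < n / m - 1 then m else n - j * m

def blockIdx (m n x : ℕ) : ℕ := min (x / m) (n / m - 1)

theorem blockLen_mem_Ico (hm : 0 < m) {j : ℕ} (hj : j < n / m) :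
    blockLen m n j ∈ Ico m (2 * m) := by
  have hqm : m * (n / m) + n % m = n := Nat.div_add_mod n m
  have hr : n % m < m := Nat.mod_lt n hm
  unfold blockLen
  split_ifs
  · simp [hm]
  · have hjm : j * m + m = m * (n / m) := by rw [show n / m = j + 1 by omega]; ring
    simp only [mem_Ico]
    omega

theorem mem_Ico_blockLen_iff (hm : 0 < m) {j x : ℕ} (hj : j < n / m) :
    x ∈ Ico (j * m) (j * m + blockLen m n j) ↔ x < n ∧ blockIdx m n x = j := by
  have hle : j * m ≤ x ↔ j ≤ x / m := (Nat.le_div_iff_mul_le hm).symm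
  have hlt : x < j * m + m ↔ x / m < j + 1 := by
    rw [Nat.div_lt_iff_lt_mul hm, add_mul, one_mul]
  have hjn : j * m + m ≤ n :=
    calc j * m + m = (j + 1) * m := by ring
      _ ≤ n / m * m := Nat.mul_le_mul_right _ hj
      _ ≤ n := Nat.div_mul_le_self n m
  unfold blockLen blockIdx
  split_ifs <;> simp only [mem_Ico] <;> omega

def cell (m n : ℕ) (v : Fin d → Fin (n / m)) : Finset (Fin d → ℕ) :=
  piFinset fun i => Ico ((v i : ℕ) * m) ((v i : ℕ) * m + blockLen m n (v i))

def cellShape (m n : ℕ) (v : Fin d → Fin (n / m)) : Finset (Fin d → ℕ) :=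
  piFinset fun i => range (blockLen m n (v i))

theorem mem_cell_iff (hm : 0 < m) {v : Fin d → Fin (n / m)} {x : Fin d → ℕ} :
    x ∈ cell m n v ↔ x ∈ cubeN d n ∧ ∀ i, blockIdx m n (x i) = v i := by
  simp only [cell, cubeN, Fintype.mem_piFinset, mem_Ico_blockLen_iff hm (v _).isLt, mem_range,
    forall_and]

theorem pairwise_disjoint_cell (hm : 0 < m) : Pairwise (Disjoint on cell (d := d) m n) := by
  intro v w hvw
  refine disjoint_left.2 fun x hv hw => hvw (funext fun i => Fin.ext ?_)
  rw [mem_cell_iff hm] at hv hw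
  rw [← hv.2 i, hw.2 i]

theorem biUnion_cell (hm : 0 < m) (hmn : m ≤ n) : univ.biUnion (cell (d := d) m n) = cubeN d n := by
  ext x
  simp only [mem_biUnion, mem_univ, true_and, mem_cell_iff hm]
  refine ⟨fun ⟨_, hx, _⟩ => hx, fun hx => ⟨fun i => ⟨blockIdx m n (x i), ?_⟩, hx, fun i => rfl⟩⟩
  have : 0 < n / m := Nat.div_pos hmn hm
  unfold blockIdx
  omega

theorem isBoxN_cell (hm : 0 < m) (v : Fin d → Fin (n / m)) : IsBoxN (cell m n v) :=
  ⟨fun i => (v i : ℕ) * m, fun i => (v i : ℕ) * m + blockLen m n (v i),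
    fun i => by beta_reduce; have := mem_Ico.1 (blockLen_mem_Ico hm (v i).isLt); omega, rfl⟩

theorem isBoxN_cellShape (hm : 0 < m) (v : Fin d → Fin (n / m)) : IsBoxN (cellShape m n v) :=
  ⟨0, fun i => blockLen m n (v i),
    fun i => by
      beta_reduce
      rw [Pi.zero_apply]
      have := mem_Ico.1 (blockLen_mem_Ico hm (v i).isLt)
      omega,
    by simp only [cellShape, Pi.zero_apply, Finset.range_eq_Ico]⟩

theorem cell_eq_image_add (v : Fin d → Fin (n / m)) :
    cell m n v = (cellShape m n v).image ((fun i => (v i : ℕ) * m) + ·) := by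
  rw [cellShape, show ((fun i => (v i : ℕ) * m) + ·) = fun x i => (v i : ℕ) * m + x i from rfl,
    ← piFinset_image fun i t => (v i : ℕ) * m + t]
  simp only [cell, Finset.range_eq_Ico, image_add_left_Ico, add_zero]

theorem cellShape_eq_cubeN {v : Fin d → Fin (n / m)} (hv : ∀ i, (v i : ℕ) < n / m - 1) :
    cellShape m n v = cubeN d m := by
  simp only [cellShape, cubeN, blockLen, if_pos (hv _)]

theorem card_ibdN_cell_le (hm : 0 < m) (v : Fin d → Fin (n / m)) :
    #(ibdN (cell m n v)) ≤ 2 * d * (2 * m) ^ (d - 1) :=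
  card_ibdN_piFinset_Ico_le fun i => by
    have := mem_Ico.1 (blockLen_mem_Ico hm (v i).isLt); omega

end BlockPartition

section CellEstimates

variable {d m n : ℕ} {Ω : Type*} [MeasurableSpace Ω] {μ : Measure Ω}
  {τ : (Fin d → ℕ) → Ω → Ω} {F : Finset (Fin d → ℕ) → Ω → ℝ} {A : Ω → ℝ}

/-- Controls the irregular cells, those touching the far faces of `S_n`: their sides lie in
`[m, 2m)`. -/
noncomputable def shapeBound (μ : Measure Ω) (F : Finset (Fin d → ℕ) → Ω → ℝ) (m : ℕ) : ℝ :=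
  ∑ l ∈ piFinset fun _ : Fin d => Ico m (2 * m), |∫ ω, F (piFinset fun i => range (l i)) ω ∂μ|

theorem neg_shapeBound_le_integral_cellShape (hm : 0 < m) (v : Fin d → Fin (n / m)) :
    -shapeBound μ F m ≤ ∫ ω, F (cellShape m n v) ω ∂μ :=
  neg_le_of_abs_le <| single_le_sum
    (f := fun l : Fin d → ℕ => |∫ ω, F (piFinset fun i => range (l i)) ω ∂μ|)
    (fun _ _ => abs_nonneg _) (Fintype.mem_piFinset.2 fun i => blockLen_mem_Ico hm (v i).isLt)

theorem AlmostSuperadditive.sum_integral_cell_ge (hF : AlmostSuperadditive μ τ F A)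
    (hm : 0 < m) :
    ((n / m - 1 : ℕ) : ℝ) ^ d * (∫ ω, F (cubeN d m) ω ∂μ + shapeBound μ F m)
      - ((n / m : ℕ) : ℝ) ^ d * shapeBound μ F m
      ≤ ∑ v : Fin d → Fin (n / m), ∫ ω, F (cell m n v) ω ∂μ := by
  set C := shapeBound μ F m
  set a := ∫ ω, F (cubeN d m) ω ∂μ
  set G : Finset (Fin d → Fin (n / m)) := piFinset fun _ => {j | (j : ℕ) < n / m - 1}
  have hG : #G = (n / m - 1) ^ d := by simp [G, Fin.card_filter_val_lt]
  have hcell : ∀ v, -C + (if v ∈ G then a + C else 0) ≤ ∫ ω, F (cell m n v) ω ∂μ := by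
    intro v
    rw [cell_eq_image_add, hF.integral_image_add _ (isBoxN_cellShape hm v)]
    split_ifs with hv
    · rw [cellShape_eq_cubeN (by simpa [G] using hv)]
      linarith
    · linarith [neg_shapeBound_le_integral_cellShape (μ := μ) (F := F) hm v]
  calc _ = ∑ v : Fin d → Fin (n / m), (-C + if v ∈ G then a + C else 0) := by
        rw [sum_add_distrib, Fintype.sum_ite_mem, sum_const, sum_const, hG, card_univ]
        simp only [Fintype.card_pi, Fintype.card_fin, prod_const, card_univ, smul_neg,
          nsmul_eq_mul, Nat.cast_pow, smul_add]
        ring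
    _ ≤ _ := sum_le_sum fun v _ => hcell v

theorem sum_card_ibdN_cell_le (hm : 0 < m) :
    ∑ v : Fin d → Fin (n / m), (#(ibdN (cell m n v)) : ℝ)
      ≤ ((n / m : ℕ) : ℝ) ^ d * (2 * d * (2 * m) ^ (d - 1)) :=
  calc _ ≤ ∑ _v : Fin d → Fin (n / m), ((2 * d * (2 * m) ^ (d - 1) : ℕ) : ℝ) :=
        sum_le_sum fun v _ => by exact_mod_cast card_ibdN_cell_le hm v
    _ = _ := by simp

theorem AlmostSuperadditive.integral_cubeN_ge (hF : AlmostSuperadditive μ τ F A)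
    (hm : 0 < m) (hmn : m ≤ n) :
    ((n / m - 1 : ℕ) : ℝ) ^ d * (∫ ω, F (cubeN d m) ω ∂μ + shapeBound μ F m)
      - ((n / m : ℕ) : ℝ) ^ d * shapeBound μ F m
      - (∫ ω, A ω ∂μ) * (((n / m : ℕ) : ℝ) ^ d * (2 * d * (2 * m) ^ (d - 1)))
      ≤ ∫ ω, F (cubeN d n) ω ∂μ := by
  have hpart := hF.sum_integral_sub_le (cell m n) (isBoxN_cell hm) (pairwise_disjoint_cell hm)
    (by rw [biUnion_cell hm hmn]; exact isBoxN_cubeN (hm.trans_le hmn))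
  rw [biUnion_cell hm hmn] at hpart
  have := mul_le_mul_of_nonneg_left (sum_card_ibdN_cell_le (d := d) (n := n) hm)
    hF.integral_defect_nonneg
  linarith [hF.sum_integral_cell_ge (n := n) hm]

end CellEstimates

theorem tendsto_natDiv_div_atTop {m : ℕ} (hm : 0 < m) :
    Tendsto (fun n : ℕ => ((n / m : ℕ) : ℝ) / n) atTop (𝓝 (m : ℝ)⁻¹) := by
  have hm' : (0 : ℝ) < m := by exact_mod_cast hm
  have h := (tendsto_nat_floor_div_atTop.comp
    (tendsto_natCast_atTop_atTop.atTop_div_const hm')).mul_const (m : ℝ)⁻¹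
  rw [one_mul] at h
  refine h.congr' ((eventually_ne_atTop 0).mono fun n hn => ?_)
  simp only [Function.comp_apply, Nat.floor_div_eq_div]
  field_simp

theorem tendsto_natDiv_sub_one_div_atTop {m : ℕ} (hm : 0 < m) :
    Tendsto (fun n : ℕ => ((n / m - 1 : ℕ) : ℝ) / n) atTop (𝓝 (m : ℝ)⁻¹) := by
  have h := (tendsto_natDiv_div_atTop hm).sub tendsto_inv_atTop_nhds_zero_nat
  rw [sub_zero] at h
  refine h.congr' ((eventually_ge_atTop m).mono fun n hn => ?_)
  show _ = ((n / m - 1 : ℕ) : ℝ) / n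
  rw [Nat.cast_sub ((Nat.one_le_div_iff hm).2 hn), sub_div, Nat.cast_one, one_div]

theorem tendsto_boundary_div_pow_atTop (d : ℕ) :
    Tendsto (fun m : ℕ => (2 * d * (2 * m) ^ (d - 1) / m ^ d : ℝ)) atTop (𝓝 0) := by
  rcases d with _ | k
  · simp
  · refine (tendsto_const_div_atTop_nhds_zero_nat (2 * (k + 1) * 2 ^ k : ℝ)).congr'
      ((eventually_ne_atTop 0).mono fun m hm => ?_)
    field_simp
    push_cast
    ring

theorem tendsto_limsup_of_eventually_lt {u e : ℕ → ℝ}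
    (hu : IsBoundedUnder (· ≤ ·) atTop u) (he : Tendsto e atTop (𝓝 0))
    (h : ∀ᶠ m in atTop, ∀ c < u m - e m, ∀ᶠ n in atTop, c < u n) :
    Tendsto u atTop (𝓝 (limsup u atTop)) := by
  have hbdd : IsBoundedUnder (· ≥ ·) atTop u := by
    obtain ⟨m, hm⟩ := h.exists
    exact ⟨_, (hm _ (sub_one_lt _)).mono fun _ => le_of_lt⟩
  refine tendsto_order.2 ⟨fun c hc => ?_, fun c hc => eventually_lt_of_limsup_lt hc hu⟩
  have hfreq : ∃ᶠ m in atTop, (c + limsup u atTop) / 2 < u m :=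
    frequently_lt_of_lt_limsup hbdd.isCoboundedUnder_le (by linarith)
  have hsmall : ∀ᶠ m in atTop, e m < (limsup u atTop - c) / 2 :=
    he.eventually (eventually_lt_nhds (by linarith))
  obtain ⟨m, hum, hem, hm⟩ := (hfreq.and_eventually (hsmall.and h)).exists
  exact hm c (by linarith)

/-- The lower bound for `avgSeq μ F n` obtained by cutting `S_n` into cells of side about `m`,
before the boundary correction. -/
noncomputable def cellLowerBound {d : ℕ} {Ω : Type*} [MeasurableSpace Ω] (μ : Measure Ω)
    (F : Finset (Fin d → ℕ) → Ω → ℝ) (m n : ℕ) : ℝ :=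
  (((n / m - 1 : ℕ) : ℝ) / n) ^ d * (∫ ω, F (cubeN d m) ω ∂μ + shapeBound μ F m)
    - (((n / m : ℕ) : ℝ) / n) ^ d * shapeBound μ F m

section Averages

variable {d m n : ℕ} {Ω : Type*} [MeasurableSpace Ω] {μ : Measure Ω}
  {τ : (Fin d → ℕ) → Ω → Ω} {F : Finset (Fin d → ℕ) → Ω → ℝ} {A : Ω → ℝ}

theorem tendsto_cellLowerBound (hm : 0 < m) :
    Tendsto (cellLowerBound μ F m) atTop (𝓝 (avgSeq μ F m)) := by
  have h := (((tendsto_natDiv_sub_one_div_atTop hm).pow d).mul_const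
    (∫ ω, F (cubeN d m) ω ∂μ + shapeBound μ F m)).sub
    (((tendsto_natDiv_div_atTop hm).pow d).mul_const (shapeBound μ F m))
  rwa [show avgSeq μ F m = (m : ℝ)⁻¹ ^ d * (∫ ω, F (cubeN d m) ω ∂μ + shapeBound μ F m)
      - (m : ℝ)⁻¹ ^ d * shapeBound μ F m by rw [avgSeq, inv_pow]; ring]

theorem AlmostSuperadditive.cellLowerBound_sub_le_avgSeq (hF : AlmostSuperadditive μ τ F A)
    (hm : 0 < m) (hmn : m ≤ n) :
    cellLowerBound μ F m n - (∫ ω, A ω ∂μ) * (2 * d * (2 * m) ^ (d - 1) / m ^ d)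
      ≤ avgSeq μ F n := by
  have hn : (0 : ℝ) < n := by exact_mod_cast hm.trans_le hmn
  have hq : ((n / m : ℕ) : ℝ) / n ≤ (m : ℝ)⁻¹ := by
    rw [div_le_iff₀ hn, inv_mul_eq_div, le_div_iff₀ (by exact_mod_cast hm)]
    exact_mod_cast Nat.div_mul_le_self n m
  have hboundary : (∫ ω, A ω ∂μ) * ((((n / m : ℕ) : ℝ) / n) ^ d * (2 * d * (2 * m) ^ (d - 1)))
      ≤ (∫ ω, A ω ∂μ) * (2 * d * (2 * m) ^ (d - 1) / m ^ d) := by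
    rw [div_eq_inv_mul _ ((m : ℝ) ^ d), ← inv_pow]
    have := hF.integral_defect_nonneg
    gcongr
  have hkey := div_le_div_of_nonneg_right (hF.integral_cubeN_ge hm hmn) (pow_nonneg hn.le d)
  calc _ ≤ cellLowerBound μ F m n
        - (∫ ω, A ω ∂μ) * ((((n / m : ℕ) : ℝ) / n) ^ d * (2 * d * (2 * m) ^ (d - 1))) := by
        linarith
    _ = _ := by rw [cellLowerBound, div_pow, div_pow]; field_simp
    _ ≤ avgSeq μ F n := hkey

end Averages

theorem convergence_of_expectations_general {d : ℕ} {Ω : Type*} [MeasurableSpace Ω] (μ : Measure Ω)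
    (τ : (Fin d → ℕ) → Ω → Ω) (F : Finset (Fin d → ℕ) → Ω → ℝ) (A : Ω → ℝ)
    (hF : AlmostSuperadditive μ τ F A)
    (hfin : IsBoundedUnder (· ≤ ·) atTop (avgSeq μ F)) :
    Filter.Tendsto (avgSeq μ F) atTop (nhds (timeConst μ F)) := by
  have he := (tendsto_boundary_div_pow_atTop d).const_mul (∫ ω, A ω ∂μ)
  rw [mul_zero] at he
  refine tendsto_limsup_of_eventually_lt hfin he ((eventually_gt_atTop 0).mono fun m hm c hc => ?_)
  have hlim := (tendsto_cellLowerBound (μ := μ) (F := F) hm).sub_const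
    ((∫ ω, A ω ∂μ) * (2 * d * (2 * m) ^ (d - 1) / m ^ d))
  filter_upwards [hlim.eventually (eventually_gt_nhds hc), eventually_ge_atTop m] with n hn hmn
  exact hn.trans_le (hF.cellLowerBound_sub_le_avgSeq hm hmn)

/-- **Convergence of expectations** (Lemma 3.4 of Akcoglu–Krengel, almost superadditive
version): for an almost superadditive process `F` with finite time constant
`γ̃(F) = limsup_n |S_n|⁻¹ E[F_{S_n}]`, the limit `lim_n |S_n|⁻¹ E[F_{S_n}]` exists and
equals `γ̃(F)`. -/
theorem convergence_of_expectations {d : ℕ} {Ω : Type*} [MeasurableSpace Ω] (μ : Measure Ω)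
    [IsProbabilityMeasure μ]
    (τ : (Fin d → ℕ) → Ω → Ω) (F : Finset (Fin d → ℕ) → Ω → ℝ) (A : Ω → ℝ)
    (hF : AlmostSuperadditive μ τ F A)
    (hfin : IsBoundedUnder (· ≤ ·) atTop (avgSeq μ F)) :
    Filter.Tendsto (avgSeq μ F) atTop (nhds (timeConst μ F)) :=
  convergence_of_expectations_general μ τ F A hF hfin
end

section
/- Let F be a nonnegative almost superadditive process and suppose (τ_u) is ergodic. Then the almost-sure limit f(ω) = lim_n (1/|S_n|) F_{S_n}(ω) is shift-invariant: f ∘ τ_u = f almost surely for every u ∈ Z_+^d, and hence f is almost surely constant. -/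
/-!
For `u ≥ 1` the shifted cube `u + S_n` lies inside `S_{n+m}`. Cutting `S_{n+m}` down to `u + S_n`
one coordinate at a time, each time into three slabs, almost superadditivity and `F ≥ 0` give
`F_{S_n} ∘ τ_u ≤ F_{S_{n+m}} + O(A n^{d-1})`, hence `f ∘ τ_u ≤ f` a.s. As `τ_u` preserves `μ`,
this inequality is an a.s. equality, so every level set `s` of `f` is a.s. invariant under the
shifts `τ_{v+1}`. The set `⋂_v ⋃_w τ_{w+v+1}⁻¹ s` is a.s. equal to `s` and strictly invariant,
so ergodicity makes `f` a.s. constant.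
-/

open MeasureTheory Filter

open Function Topology

def boxN {d : ℕ} (a b : Fin d → ℕ) : Finset (Fin d → ℕ) :=
  Fintype.piFinset fun i => Finset.Ico (a i) (b i)

section Boxes

variable {d : ℕ}

@[simp]
lemma mem_boxN {a b x : Fin d → ℕ} : x ∈ boxN a b ↔ ∀ i, a i ≤ x i ∧ x i < b i := by
  simp [boxN]

lemma isBoxN_boxN {a b : Fin d → ℕ} (h : ∀ i, a i < b i) : IsBoxN (boxN a b) :=
  ⟨a, b, h, rfl⟩

lemma cubeN_eq_boxN (n : ℕ) : cubeN d n = boxN 0 fun _ => n := by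
  ext x
  simp [cubeN]

lemma image_add_cubeN (u : Fin d → ℕ) (n : ℕ) :
    (cubeN d n).image (fun x => u + x) = boxN u fun i => u i + n := by
  ext y
  simp only [cubeN, Finset.mem_image, Fintype.mem_piFinset, Finset.mem_range, mem_boxN]
  constructor
  · rintro ⟨x, hx, rfl⟩ i
    simp only [Pi.add_apply]
    have := hx i
    omega
  · intro hy
    refine ⟨y - u, fun i => ?_, funext fun i => ?_⟩ <;>
    · simp only [Pi.add_apply, Pi.sub_apply]
      have := hy i
      omega

lemma exists_eq_or_succ_eq_of_mem_ibdN {a b x : Fin d → ℕ} (hx : x ∈ ibdN (boxN a b)) :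
    ∃ i, x i = a i ∨ x i + 1 = b i := by
  classical
  obtain ⟨hxB, y, hy, hadj⟩ := Finset.mem_filter.mp hx
  rw [mem_boxN] at hxB hy
  push Not at hy
  obtain ⟨i, hi⟩ := hy
  have hle : ((x i : ℤ) - y i).natAbs ≤ 1 := hadj ▸
    Finset.single_le_sum (f := fun j => ((x j : ℤ) - y j).natAbs) (fun j _ => Nat.zero_le _)
      (Finset.mem_univ i)
  have := hxB i
  by_cases h : a i ≤ y i
  · have := hi h
    exact ⟨i, by omega⟩
  · exact ⟨i, by omega⟩

lemma card_filter_cubeN_apply_eq_le (N : ℕ) (i : Fin d) (c : ℕ) :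
    ((cubeN d N).filter (· i = c)).card ≤ N ^ (d - 1) := by
  classical
  calc _ ≤ (Fintype.piFinset (update (fun _ => Finset.range N) i {c})).card := by
        refine Finset.card_le_card fun x hx => ?_
        rw [Finset.mem_filter, cubeN, Fintype.mem_piFinset] at hx
        refine Fintype.mem_piFinset.mpr fun j => ?_
        rcases eq_or_ne j i with rfl | hj
        · simp [hx.2]
        · simp [hj, hx.1 j]
    _ = N ^ (d - 1) := by
        rw [Fintype.card_piFinset]
        simp [apply_update (fun _ (s : Finset ℕ) => s.card), Finset.prod_update_of_mem,
          Finset.card_sdiff]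

lemma card_ibdN_boxN_le {a b : Fin d → ℕ} {N : ℕ} (hb : ∀ i, b i ≤ N) :
    (ibdN (boxN a b)).card ≤ 2 * d * N ^ (d - 1) := by
  classical
  let face (i : Fin d) (c : ℕ) := (cubeN d N).filter (· i = c)
  have hsub : ibdN (boxN a b) ⊆ Finset.univ.biUnion fun i => face i (a i) ∪ face i (b i - 1) := by
    intro x hx
    have hxN : x ∈ cubeN d N := by
      have := mem_boxN.mp (Finset.mem_of_mem_filter _ hx)
      simp only [cubeN, Fintype.mem_piFinset, Finset.mem_range]
      exact fun j => (this j).2.trans_le (hb j)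
    obtain ⟨i, hi⟩ := exists_eq_or_succ_eq_of_mem_ibdN hx
    simp only [Finset.mem_biUnion, Finset.mem_univ, true_and, Finset.mem_union, face,
      Finset.mem_filter]
    refine ⟨i, hi.imp (fun h => ⟨hxN, h⟩) (fun h => ⟨hxN, by omega⟩)⟩
  calc _ ≤ _ := Finset.card_le_card hsub
    _ ≤ ∑ i, (face i (a i) ∪ face i (b i - 1)).card := Finset.card_biUnion_le
    _ ≤ ∑ _i : Fin d, 2 * N ^ (d - 1) := Finset.sum_le_sum fun i _ =>
        (Finset.card_union_le _ _).trans <| by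
          rw [two_mul]
          exact Nat.add_le_add (card_filter_cubeN_apply_eq_le N i _)
            (card_filter_cubeN_apply_eq_le N i _)
    _ = 2 * d * N ^ (d - 1) := by simp; ring

end Boxes

section Slabs

variable {d : ℕ} (a b : Fin d → ℕ) (i : Fin d)

def slabN (p q : ℕ) : Finset (Fin d → ℕ) := boxN (update a i p) (update b i q)

variable {a b i}

lemma mem_slabN {p q : ℕ} {x : Fin d → ℕ} :
    x ∈ slabN a b i p q ↔ (p ≤ x i ∧ x i < q) ∧ ∀ j ≠ i, a j ≤ x j ∧ x j < b j := by
  rw [slabN, mem_boxN]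
  constructor
  · intro h
    exact ⟨by simpa using h i, fun j hj => by simpa [hj] using h j⟩
  · rintro ⟨hi, h⟩ j
    rcases eq_or_ne j i with rfl | hj
    · simpa using hi
    · simpa [hj] using h j hj

lemma slabN_self : slabN a b i (a i) (b i) = boxN a b := by
  simp [slabN]

lemma slabN_union {p q r : ℕ} (hpq : p ≤ q) (hqr : q ≤ r) :
    slabN a b i p q ∪ slabN a b i q r = slabN a b i p r := by
  ext x
  simp only [Finset.mem_union, mem_slabN]
  constructor
  · rintro (⟨h, h'⟩ | ⟨h, h'⟩) <;> exact ⟨by omega, h'⟩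
  · rintro ⟨h, h'⟩
    by_cases hx : x i < q
    · exact .inl ⟨by omega, h'⟩
    · exact .inr ⟨by omega, h'⟩

lemma disjoint_slabN {p q p' q' : ℕ} (h : q ≤ p') :
    Disjoint (slabN a b i p q) (slabN a b i p' q') :=
  Finset.disjoint_left.mpr fun x hx hx' => by
    rw [mem_slabN] at hx hx'
    omega

lemma isBoxN_slabN (hab : ∀ j, a j < b j) {p q : ℕ} (hpq : p < q) :
    IsBoxN (slabN a b i p q) :=
  isBoxN_boxN fun j => by rcases eq_or_ne j i with rfl | hj <;> simp [*]

lemma card_ibdN_slabN_le {N p q : ℕ} (hb : ∀ j, b j ≤ N) (hq : q ≤ b i) :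
    (ibdN (slabN a b i p q)).card ≤ 2 * d * N ^ (d - 1) :=
  card_ibdN_boxN_le fun j => by rcases eq_or_ne j i with rfl | hj <;> simp [*, hq.trans]

end Slabs

section PartialBoxes

variable {d : ℕ}

def prefixN (v : Fin d → ℕ) (k c : ℕ) : Fin d → ℕ := fun j => if (j : ℕ) < k then v j else c

lemma prefixN_succ (v : Fin d → ℕ) {k : ℕ} (c : ℕ) (hk : k < d) :
    prefixN v (k + 1) c = update (prefixN v k c) ⟨k, hk⟩ (v ⟨k, hk⟩) := by
  funext j
  rcases eq_or_ne j ⟨k, hk⟩ with rfl | hj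
  · simp [prefixN]
  · have : (j : ℕ) ≠ k := fun h => hj (Fin.ext h)
    simp only [prefixN, update_of_ne hj]
    split_ifs <;> omega

lemma prefixN_self (v : Fin d → ℕ) (c : ℕ) : prefixN v d c = v :=
  funext fun j => if_pos j.isLt

def partialBoxN (u : Fin d → ℕ) (n N k : ℕ) : Finset (Fin d → ℕ) :=
  boxN (prefixN u k 0) (prefixN (fun j => u j + n) k N)

lemma partialBoxN_zero (u : Fin d → ℕ) (n N : ℕ) : partialBoxN u n N 0 = cubeN d N := by
  simp only [partialBoxN, cubeN_eq_boxN]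
  rfl

lemma partialBoxN_self (u : Fin d → ℕ) (n N : ℕ) :
    partialBoxN u n N d = boxN u fun j => u j + n := by
  simp only [partialBoxN, prefixN_self]

end PartialBoxes

lemma natCast_mul_pow_pred (d : ℕ) {x : ℝ} (hx : x ≠ 0) :
    (d : ℝ) * x ^ (d - 1) = d * x ^ d / x := by
  rcases d with _ | d
  · simp
  · rw [pow_succ, Nat.add_sub_cancel, mul_div_assoc, mul_div_cancel_right₀ _ hx]

namespace AlmostSuperadditive

variable {d : ℕ} {Ω : Type*} [MeasurableSpace Ω] {μ : Measure Ω} {τ : (Fin d → ℕ) → Ω → Ω}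
  {F : Finset (Fin d → ℕ) → Ω → ℝ} {A : Ω → ℝ}

theorem le_add_of_slabN (hF : AlmostSuperadditive μ τ F A) (hpos : ∀ B, IsBoxN B → ∀ ω, 0 ≤ F B ω)
    {a b : Fin d → ℕ} (hab : ∀ j, a j < b j) {N : ℕ} (hb : ∀ j, b j ≤ N) {i : Fin d} {p q : ℕ}
    (hp : a i < p) (hpq : p < q) (hq : q < b i) (ω : Ω) :
    F (slabN a b i p q) ω ≤ F (boxN a b) ω + A ω * (3 * (2 * d * N ^ (d - 1))) := by
  let Bs : Fin 3 → Finset (Fin d → ℕ) :=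
    ![slabN a b i (a i) p, slabN a b i p q, slabN a b i q (b i)]
  have hbox : ∀ k, IsBoxN (Bs k) := by
    intro k
    fin_cases k
    exacts [isBoxN_slabN hab hp, isBoxN_slabN hab hpq, isBoxN_slabN hab hq]
  have hdisj : ∀ k l, k ≠ l → Disjoint (Bs k) (Bs l) := by
    intro k l hkl
    fin_cases k <;> fin_cases l <;> simp only [Bs] at hkl ⊢ <;> first
      | exact absurd rfl hkl
      | exact disjoint_slabN (by omega)
      | exact (disjoint_slabN (by omega)).symm
  have hunion : Finset.univ.biUnion Bs = boxN a b := by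
    rw [← slabN_self, ← slabN_union hp.le (hpq.trans hq).le, ← slabN_union hpq.le hq.le]
    ext x
    simp [Bs, Fin.exists_fin_succ]
  have hsup := hF.superadd 3 Bs hbox hdisj (hunion ▸ isBoxN_boxN hab) ω
  rw [hunion, Fin.sum_univ_three, Fin.sum_univ_three] at hsup
  have hcard : ∀ k, ((ibdN (Bs k)).card : ℝ) ≤ 2 * d * N ^ (d - 1) := by
    intro k
    fin_cases k <;> exact_mod_cast card_ibdN_slabN_le hb (by omega)
  have hA : A ω * (∑ k, ((ibdN (Bs k)).card : ℝ)) ≤ A ω * (3 * (2 * d * N ^ (d - 1))) := by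
    refine mul_le_mul_of_nonneg_left ?_ (hF.Anonneg ω)
    rw [Fin.sum_univ_three]
    linarith [hcard 0, hcard 1, hcard 2]
  rw [Fin.sum_univ_three] at hA
  change F (Bs 1) ω ≤ _
  linarith [hpos _ (hbox 0) ω, hpos _ (hbox 2) ω]

theorem partialBoxN_le (hF : AlmostSuperadditive μ τ F A) (hpos : ∀ B, IsBoxN B → ∀ ω, 0 ≤ F B ω)
    {u : Fin d → ℕ} {n N : ℕ} (hu : ∀ j, 0 < u j) (hn : 0 < n) (hN : ∀ j, u j + n < N)
    {k : ℕ} (hk : k ≤ d) (ω : Ω) :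
    F (partialBoxN u n N k) ω ≤ F (cubeN d N) ω + A ω * (k * (3 * (2 * d * N ^ (d - 1)))) := by
  induction k with
  | zero => simp [partialBoxN_zero]
  | succ k ih =>
    have hk' : k < d := hk
    have hab : ∀ j, prefixN u k 0 j < prefixN (fun j => u j + n) k N j := fun j => by
      have := hN j
      simp only [prefixN]
      split_ifs <;> omega
    have hb : ∀ j, prefixN (fun j => u j + n) k N j ≤ N := fun j => by
      have := hN j
      simp only [prefixN]
      split_ifs <;> omega
    have step := hF.le_add_of_slabN hpos hab hb (i := ⟨k, hk'⟩) (p := u ⟨k, hk'⟩)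
      (q := u ⟨k, hk'⟩ + n) (by simpa [prefixN] using hu _) (by omega)
      (by simpa [prefixN] using hN _) ω
    rw [slabN, ← prefixN_succ, ← prefixN_succ] at step
    calc F (partialBoxN u n N (k + 1)) ω
        ≤ F (partialBoxN u n N k) ω + A ω * (3 * (2 * d * N ^ (d - 1))) := step
      _ ≤ F (cubeN d N) ω + A ω * (k * (3 * (2 * d * N ^ (d - 1))))
          + A ω * (3 * (2 * d * N ^ (d - 1))) := by linarith [ih hk'.le]
      _ = _ := by push_cast; ring

theorem comp_shift_cubeN_le (hF : AlmostSuperadditive μ τ F A)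
    (hpos : ∀ B, IsBoxN B → ∀ ω, 0 ≤ F B ω)
    {u : Fin d → ℕ} {n N : ℕ} (hu : ∀ j, 0 < u j) (hn : 0 < n) (hN : ∀ j, u j + n < N)
    (ω : Ω) :
    F (cubeN d n) (τ u ω) ≤ F (cubeN d N) ω + A ω * (6 * d ^ 2 * N ^ (d - 1)) := by
  have hcube : IsBoxN (cubeN d n) := cubeN_eq_boxN n ▸ isBoxN_boxN fun _ => hn
  have hshift : F (cubeN d n) (τ u ω) = F (partialBoxN u n N d) ω := by
    rw [partialBoxN_self, ← image_add_cubeN, hF.shift u _ hcube]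
    rfl
  rw [hshift]
  convert hF.partialBoxN_le hpos hu hn hN le_rfl ω using 2
  ring

theorem ae_comp_add_one_le (hF : AlmostSuperadditive μ τ F A)
    (hpos : ∀ B, IsBoxN B → ∀ ω, 0 ≤ F B ω) {f : Ω → ℝ}
    (hf : ∀ᵐ ω ∂μ, Tendsto (fun n => F (cubeN d n) ω / (n : ℝ) ^ d) atTop (𝓝 (f ω)))
    (u : Fin d → ℕ) : ∀ᵐ ω ∂μ, f (τ (u + 1) ω) ≤ f ω := by
  -- `m` is large enough that `S_n` shifted by `u + 1` lies inside `S_{n + m}`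
  set m := ∑ j, u j + 2
  have hm : ∀ n j, (u + 1) j + n < n + m := fun n j => by
    have := Finset.single_le_sum (fun j _ => Nat.zero_le (u j)) (Finset.mem_univ j)
    simp only [Pi.add_apply, Pi.one_apply]
    omega
  filter_upwards [hf, (hF.meas (u + 1)).quasiMeasurePreserving.ae hf] with ω hω hτω
  have hbound : ∀ n ≥ 1, F (cubeN d n) (τ (u + 1) ω) / (n : ℝ) ^ d ≤
      (F (cubeN d (n + m)) ω / ((n + m : ℕ) : ℝ) ^ d + 6 * d * (d * A ω) / ((n + m : ℕ) : ℝ))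
        / ((n : ℝ) / ((n + m : ℕ) : ℝ)) ^ d := fun n hn => by
    have hN : ((n + m : ℕ) : ℝ) ≠ 0 := by positivity
    have hn' : (0 : ℝ) < (n : ℝ) ^ d := by positivity
    have key := hF.comp_shift_cubeN_le hpos (u := u + 1) (fun j => by simp) hn (hm n) ω
    have hrhs : (F (cubeN d (n + m)) ω / ((n + m : ℕ) : ℝ) ^ d
          + 6 * d * (d * A ω) / ((n + m : ℕ) : ℝ)) / ((n : ℝ) / ((n + m : ℕ) : ℝ)) ^ d
        = (F (cubeN d (n + m)) ω + A ω * (6 * d ^ 2 * ((n + m : ℕ) : ℝ) ^ (d - 1))) / n ^ d := by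
      rw [show (6 : ℝ) * d ^ 2 * ((n + m : ℕ) : ℝ) ^ (d - 1)
          = 6 * d * (d * ((n + m : ℕ) : ℝ) ^ (d - 1)) by ring, natCast_mul_pow_pred d hN, div_pow]
      field_simp
    rw [hrhs]
    exact div_le_div_of_nonneg_right key hn'.le
  have hlim : Tendsto (fun n : ℕ =>
      (F (cubeN d (n + m)) ω / ((n + m : ℕ) : ℝ) ^ d + 6 * d * (d * A ω) / ((n + m : ℕ) : ℝ))
        / ((n : ℝ) / ((n + m : ℕ) : ℝ)) ^ d) atTop (𝓝 ((f ω + 0) / 1 ^ d)) := by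
    have hratio : Tendsto (fun n : ℕ => (n : ℝ) / ((n + m : ℕ) : ℝ)) atTop (𝓝 1) := by
      simpa using tendsto_natCast_div_add_atTop (m : ℝ)
    refine ((hω.comp (tendsto_add_atTop_nat m)).add ?_).div (hratio.pow d) (by simp)
    exact (tendsto_const_div_atTop_nhds_zero_nat _).comp (tendsto_add_atTop_nat m)
  simpa using le_of_tendsto_of_tendsto hτω hlim ((eventually_ge_atTop 1).mono hbound)

end AlmostSuperadditive

theorem MeasureTheory.MeasurePreserving.comp_ae_eq_of_ae_comp_le {α : Type*} [MeasurableSpace α]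
    {μ : Measure α} [IsFiniteMeasure μ] {T : α → α} (hT : MeasurePreserving T μ μ) {g : α → ℝ}
    (hg : AEMeasurable g μ) (hle : ∀ᵐ x ∂μ, g (T x) ≤ g x) : g ∘ T =ᵐ[μ] g := by
  -- `T` preserves the measure of each super-level set, and maps it a.e. into itself
  have hlevel : ∀ q : ℚ, T ⁻¹' {x | (q : ℝ) < g x} =ᵐ[μ] {x | (q : ℝ) < g x} := fun q => by
    have hs : NullMeasurableSet {x | (q : ℝ) < g x} μ := hg.nullMeasurable measurableSet_Ioi
    refine ae_eq_of_ae_subset_of_measure_ge ?_ (hT.measure_preimage hs).ge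
      (hs.preimage hT.quasiMeasurePreserving) (measure_ne_top _ _)
    filter_upwards [hle] with x hx hxs
    exact lt_of_lt_of_le hxs hx
  filter_upwards [hle, ae_all_iff.mpr fun q => (hlevel q).mem_iff] with x hx hq
  refine hx.antisymm (le_of_not_gt fun hlt => ?_)
  obtain ⟨q, hq₁, hq₂⟩ := exists_rat_btwn hlt
  exact hq₁.not_gt ((hq q).mpr hq₂)

section Ergodic

variable {M Ω : Type*} [AddCommMonoid M] {τ : M → Ω → Ω}

lemma preimage_iInter_iUnion_preimage_add (hsemi : ∀ u v, τ (u + v) = τ u ∘ τ v) (e : M)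
    (s : Set Ω) (u : M) :
    τ u ⁻¹' (⋂ v, ⋃ w, τ (w + v + e) ⁻¹' s) = ⋂ v, ⋃ w, τ (w + v + e) ⁻¹' s := by
  have hcomp : ∀ a ω, τ a (τ u ω) = τ (a + u) ω := fun a ω => by rw [hsemi]; rfl
  ext ω
  simp only [Set.mem_preimage, Set.mem_iInter, Set.mem_iUnion, hcomp]
  constructor
  · intro h v
    obtain ⟨w, hw⟩ := h v
    exact ⟨w + u, by rwa [show w + u + v + e = w + v + e + u by abel]⟩
  · intro h v
    obtain ⟨w, hw⟩ := h (v + u)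
    exact ⟨w, by rwa [show w + v + e + u = w + (v + u) + e by abel]⟩

variable [Countable M] [MeasurableSpace Ω] {μ : Measure Ω}

lemma iInter_iUnion_preimage_add_ae_eq {e : M} {s : Set Ω}
    (hinv : ∀ u, τ (u + e) ⁻¹' s =ᵐ[μ] s) : (⋂ v, ⋃ w, τ (w + v + e) ⁻¹' s) =ᵐ[μ] s := by
  have hunion : ∀ v, (⋃ w, τ (w + v + e) ⁻¹' s) =ᵐ[μ] s := fun v => by
    simpa only [Set.iUnion_const] using
      Filter.EventuallyEq.countable_iUnion fun w => hinv (w + v)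
  simpa only [Set.iInter_const] using Filter.EventuallyEq.countable_iInter hunion

theorem measure_eq_zero_or_one_of_ae_invariant (hmeas : ∀ u, Measurable (τ u))
    (hsemi : ∀ u v, τ (u + v) = τ u ∘ τ v)
    (herg : ∀ s : Set Ω, MeasurableSet s → (∀ u, τ u ⁻¹' s = s) → μ s = 0 ∨ μ s = 1)
    (e : M) {s : Set Ω} (hs : MeasurableSet s) (hinv : ∀ u, τ (u + e) ⁻¹' s =ᵐ[μ] s) :
    μ s = 0 ∨ μ s = 1 := by
  rw [← measure_congr (iInter_iUnion_preimage_add_ae_eq hinv)]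
  exact herg _ (.iInter fun v => .iUnion fun w => hmeas _ hs)
    (preimage_iInter_iUnion_preimage_add hsemi e s)

theorem exists_ae_eq_const_of_ae_invariant [IsProbabilityMeasure μ]
    (hτ : ∀ u, Measure.QuasiMeasurePreserving (τ u) μ μ) (hsemi : ∀ u v, τ (u + v) = τ u ∘ τ v)
    (herg : ∀ s : Set Ω, MeasurableSet s → (∀ u, τ u ⁻¹' s = s) → μ s = 0 ∨ μ s = 1)
    (e : M) {f : Ω → ℝ} (hf : AEMeasurable f μ) (hinv : ∀ u, f ∘ τ (u + e) =ᵐ[μ] f) :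
    ∃ c, f =ᵐ[μ] const Ω c := by
  set g := hf.mk f
  have hg : ∀ u, g ∘ τ (u + e) =ᵐ[μ] g := fun u =>
    ((hτ _).ae_eq hf.ae_eq_mk.symm).trans ((hinv u).trans hf.ae_eq_mk)
  obtain ⟨c, hc⟩ : ∃ c, g =ᵐ[μ] const Ω c := by
    refine exists_eventuallyEq_const_of_forall_separating MeasurableSet fun U hU => ?_
    have hs : MeasurableSet (g ⁻¹' U) := hf.measurable_mk hU
    have hsinv : ∀ u, τ (u + e) ⁻¹' (g ⁻¹' U) =ᵐ[μ] g ⁻¹' U := fun u =>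
      ((hg u).mono fun x hx => by
        rw [Set.mem_preimage, Set.mem_preimage, Set.mem_preimage, ← hx]
        rfl).set_eq
    rcases measure_eq_zero_or_one_of_ae_invariant (fun u => (hτ u).measurable) hsemi herg e hs
      hsinv with h | h
    · exact .inr (measure_eq_zero_iff_ae_notMem.mp h)
    · exact .inl ((ae_iff_measure_eq hs.nullMeasurableSet).mpr (h.trans measure_univ.symm))
  exact ⟨c, hf.ae_eq_mk.trans hc⟩

end Ergodic

/-- **Shift invariance of the limit** (Step 4): for a nonnegative almost superadditive
process with ergodic semigroup `(τ_u)`, the almost-sure limit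
`f(ω) = lim_n |S_n|⁻¹ F_{S_n}(ω)` satisfies `f ∘ τ_u = f` a.s. for every `u`,
and hence `f` is almost surely constant. -/
theorem limit_shift_invariant {d : ℕ} {Ω : Type*} [MeasurableSpace Ω] (μ : Measure Ω)
    [IsProbabilityMeasure μ]
    (τ : (Fin d → ℕ) → Ω → Ω) (F : Finset (Fin d → ℕ) → Ω → ℝ) (A : Ω → ℝ)
    (hF : AlmostSuperadditive μ τ F A)
    (hpos : ∀ B, IsBoxN B → ∀ ω, 0 ≤ F B ω)
    (herg : ∀ s : Set Ω, MeasurableSet s → (∀ u, (τ u) ⁻¹' s = s) → μ s = 0 ∨ μ s = 1)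
    (f : Ω → ℝ) (hfm : AEMeasurable f μ)
    (hf : ∀ᵐ ω ∂μ, Filter.Tendsto (fun n => F (cubeN d n) ω / (n : ℝ) ^ d) atTop
      (nhds (f ω))) :
    (∀ u : Fin d → ℕ, ∀ᵐ ω ∂μ, f (τ u ω) = f ω) ∧ (∃ c : ℝ, ∀ᵐ ω ∂μ, f ω = c) := by
  have hinv : ∀ u, f ∘ τ (u + 1) =ᵐ[μ] f := fun u =>
    (hF.meas (u + 1)).comp_ae_eq_of_ae_comp_le hfm (hF.ae_comp_add_one_le hpos hf u)
  obtain ⟨c, hc⟩ := exists_ae_eq_const_of_ae_invariant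
    (fun u => (hF.meas u).quasiMeasurePreserving) hF.semigroup herg 1 hfm hinv
  refine ⟨fun u => ?_, c, hc⟩
  filter_upwards [(hF.meas u).quasiMeasurePreserving.ae hc, hc] with ω hτω hω
  exact hτω.trans hω.symm
end

section
/- Let B be a box in Z^d partitioned into disjoint boxes B_1,...,B_k, with fixed boundary height functions induced by a common height function on B. Define F_B = ln Z_{B} where Z_B = Σ_{h ∈ M(B, h_∂B)} exp(H(h)) is the partition function over height functions on B with the fixed boundary data, and similarly F_{B_i}. If |ω_e| ≤ C for all edges e, then F_B ≥ Σ_{i=1}^k F_{B_i} − d·C·Σ_{i=1}^k |∂B_i|. -/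
open Filter

/-- Adjacency in `ℤ^d`: `x ∼ y` iff their `l¹`-distance is 1. -/
def adjZ {d : ℕ} (x y : Fin d → ℤ) : Prop := (∑ i, |x i - y i|) = 1

/-- The discrete hypercube `S_n = {0,...,n-1}^d ⊂ ℤ^d`. -/
noncomputable def cubeZ (d n : ℕ) : Finset (Fin d → ℤ) := Fintype.piFinset fun _ => Finset.Ico (0 : ℤ) (n : ℤ)

/-- The inner boundary `∂B = {x ∈ B : ∃ y ∉ B, x ∼ y}`. -/
noncomputable def ibdZ {d : ℕ} (B : Finset (Fin d → ℤ)) : Finset (Fin d → ℤ) :=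
  @Finset.filter _ (fun x => ∃ y, y ∉ B ∧ adjZ x y) (Classical.decPred _) B

/-- A box in `ℤ^d`: a product of integer intervals `[aᵢ, bᵢ)`. -/
def IsBoxZ {d : ℕ} (B : Finset (Fin d → ℤ)) : Prop :=
  ∃ a b : Fin d → ℤ, (∀ i, a i < b i) ∧ B = Fintype.piFinset fun i => Finset.Ico (a i) (b i)

/-- `h` is a height function on `B`: `|h(x) − h(y)| = 1` for adjacent `x, y ∈ B`. -/
def hgt {d : ℕ} (B : Finset (Fin d → ℤ)) (h : (Fin d → ℤ) → ℤ) : Prop :=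
  ∀ x ∈ B, ∀ y ∈ B, adjZ x y → |h x - h y| = 1

/-- The Hamiltonian `H(h) = (1/2) Σ_{x∼y∈B} ω_{e_{h(x),h(y)}}`; the edge of `ℤ` between the
adjacent integers `h(x)` and `h(y)` is recorded by its lower endpoint, and the sum runs over
ordered pairs of adjacent vertices of `B` (each unordered pair counted twice). -/
noncomputable def ham {d : ℕ} (w : ℤ → ℝ) (B : Finset (Fin d → ℤ))
    (h : (Fin d → ℤ) → ℤ) : ℝ :=
  (1 / 2) * ∑ p ∈ @Finset.filter _ (fun p => adjZ p.1 p.2) (Classical.decPred _) (B ×ˢ B),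
    w (min (h p.1) (h p.2))

/-- `M(B, h_∂B)`: height functions on `B` agreeing with the boundary data `hb` on the inner
boundary of `B` (normalized to vanish off `B`). -/
def Mset {d : ℕ} (B : Finset (Fin d → ℤ)) (hb : (Fin d → ℤ) → ℤ) :
    Set ((Fin d → ℤ) → ℤ) :=
  {h | hgt B h ∧ (∀ x ∈ ibdZ B, h x = hb x) ∧ (∀ x ∉ B, h x = 0)}

/-- The partition function `Z_{B, h_∂B, ω} = Σ_{h ∈ M(B,h_∂B)} exp(H(h))`. -/
noncomputable def Zfn {d : ℕ} (w : ℤ → ℝ) (B : Finset (Fin d → ℤ))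
    (hb : (Fin d → ℤ) → ℤ) : ℝ :=
  ∑' h : Mset B hb, Real.exp (ham w B h.1)

/-!
Gluing configurations of the pieces, which all agree with `H₀` on the boundaries of the pieces,
injects `∏ᵢ M(Bᵢ, H₀)` into `M(B, H₀)`. The energy of a glued configuration differs from the sum of
the energies of its pieces only through pairs of adjacent vertices lying in different pieces; each
such ordered pair starts at a vertex of some `∂Bᵢ`, so there are at most `2d Σᵢ |∂Bᵢ|` of them,
and each contributes at least `-C/2`. Hence `e^{-dC Σᵢ |∂Bᵢ|} ∏ᵢ Z_{Bᵢ} ≤ Z_B`.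
-/

open Finset Function

section Lattice

variable {d : ℕ}

lemma adjZ_comm {x y : Fin d → ℤ} : adjZ x y ↔ adjZ y x := by
  simp only [adjZ, abs_sub_comm (x _)]

lemma sum_abs_sub_update (x y : Fin d → ℤ) (j : Fin d) (v : ℤ) :
    ∑ i, |x i - update y j v i| = ∑ i, |x i - y i| - |x j - y j| + |x j - v| := by
  rw [← add_sum_erase _ _ (mem_univ j), ← add_sum_erase _ _ (mem_univ j),
    update_self, sum_congr rfl fun i hi => by
      rw [update_of_ne (ne_of_mem_erase hi)]]
  ring

lemma adjZ_update (y : Fin d → ℤ) (j : Fin d) {s : ℤ} (hs : |s| = 1) :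
    adjZ y (update y j (y j + s)) := by
  simp [adjZ, sum_abs_sub_update, hs]

lemma exists_eq_update_of_adjZ {x y : Fin d → ℤ} (h : adjZ x y) :
    ∃ j, ∃ s ∈ ({1, -1} : Finset ℤ), y = update x j (x j + s) := by
  obtain ⟨j, hj⟩ : ∃ j, x j ≠ y j := by
    by_contra! hxy
    simp [adjZ, hxy] at h
  have hsplit := add_sum_erase univ (fun i => |x i - y i|) (mem_univ j)
  have hrest_nonneg := sum_nonneg (s := univ.erase j) fun i _ => abs_nonneg (x i - y i)
  have hj1 := Int.one_le_abs (sub_ne_zero.mpr hj)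
  unfold adjZ at h
  have hrest : ∀ i ≠ j, x i = y i := fun i hi => by
    have := (sum_eq_zero_iff_of_nonneg fun i _ => abs_nonneg (x i - y i)).mp (by omega) i
      (mem_erase.mpr ⟨hi, mem_univ i⟩)
    simpa [sub_eq_zero] using this
  have hxy1 : |x j - y j| = 1 := by omega
  refine ⟨j, y j - x j, ?_, funext fun i => ?_⟩
  · rw [abs_eq zero_le_one] at hxy1
    simp only [mem_insert, mem_singleton]
    omega
  · rcases eq_or_ne i j with rfl | hi
    · simp
    · simp [update_of_ne hi, hrest i hi]

noncomputable def nbrs (x : Fin d → ℤ) : Finset (Fin d → ℤ) :=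
  (univ ×ˢ ({1, -1} : Finset ℤ)).image fun js => update x js.1 (x js.1 + js.2)

lemma mem_nbrs_of_adjZ {x y : Fin d → ℤ} (h : adjZ x y) : y ∈ nbrs x := by
  obtain ⟨j, s, hs, rfl⟩ := exists_eq_update_of_adjZ h
  exact mem_image.mpr ⟨(j, s), mem_product.mpr ⟨mem_univ j, hs⟩, rfl⟩

lemma card_nbrs_le (x : Fin d → ℤ) : #(nbrs x) ≤ 2 * d := by
  calc #(nbrs x) ≤ #(univ ×ˢ ({1, -1} : Finset ℤ)) := card_image_le
    _ = 2 * d := by simp [mul_comm]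

lemma exists_adjZ_step_of_mem_box {a b x y : Fin d → ℤ}
    (hx : x ∈ Fintype.piFinset fun i => Ico (a i) (b i))
    (hy : y ∈ Fintype.piFinset fun i => Ico (a i) (b i)) (hxy : x ≠ y) :
    ∃ y' ∈ Fintype.piFinset (fun i => Ico (a i) (b i)),
      adjZ y y' ∧ ∑ i, |x i - y' i| + 1 = ∑ i, |x i - y i| := by
  obtain ⟨j, hj⟩ := ne_iff.mp hxy
  have hxj := mem_Ico.mp (Fintype.mem_piFinset.mp hx j)
  have hyj := mem_Ico.mp (Fintype.mem_piFinset.mp hy j)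
  -- step from `y` one unit towards `x` in coordinate `j`
  set s := Int.sign (x j - y j)
  have hs : (s = 1 ∧ y j < x j) ∨ (s = -1 ∧ x j < y j) := by
    rcases (sub_ne_zero.mpr hj).lt_or_gt with h | h
    · exact Or.inr ⟨Int.sign_eq_neg_one_of_neg h, by omega⟩
    · exact Or.inl ⟨Int.sign_eq_one_of_pos h, by omega⟩
  refine ⟨update y j (y j + s), Fintype.mem_piFinset.mpr fun i => ?_,
    adjZ_update y j (by rcases hs with ⟨h, -⟩ | ⟨h, -⟩ <;> simp [h]), ?_⟩
  · rcases eq_or_ne i j with rfl | hi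
    · rw [update_self, mem_Ico]
      omega
    · rw [update_of_ne hi]
      exact Fintype.mem_piFinset.mp hy i
  · rw [sum_abs_sub_update]
    rcases hs with ⟨h, hlt⟩ | ⟨h, hlt⟩ <;> rw [h]
    · rw [abs_of_pos (by omega : 0 < x j - y j), abs_of_nonneg (by omega : 0 ≤ x j - (y j + 1))]
      ring
    · rw [abs_of_neg (by omega : x j - y j < 0), abs_of_nonpos (by omega : x j - (y j + -1) ≤ 0)]
      ring

lemma abs_sub_le_of_hgt_box {a b : Fin d → ℤ} {h : (Fin d → ℤ) → ℤ}
    (hh : hgt (Fintype.piFinset fun i => Ico (a i) (b i)) h) {x y : Fin d → ℤ}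
    (hx : x ∈ Fintype.piFinset fun i => Ico (a i) (b i))
    (hy : y ∈ Fintype.piFinset fun i => Ico (a i) (b i)) :
    |h x - h y| ≤ ∑ i, |x i - y i| := by
  obtain ⟨n, hn⟩ : ∃ n : ℕ, ∑ i, |x i - y i| = n :=
    ⟨_, (Int.toNat_of_nonneg (sum_nonneg fun i _ => abs_nonneg (x i - y i))).symm⟩
  induction n generalizing y with
  | zero =>
    obtain rfl : x = y := funext fun i => by
      simpa [sub_eq_zero] using
        (sum_eq_zero_iff_of_nonneg fun i _ => abs_nonneg (x i - y i)).mp hn i (mem_univ i)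
    simp
  | succ n ih =>
    obtain ⟨y', hy', hadj, hsum⟩ :=
      exists_adjZ_step_of_mem_box hx hy (by rintro rfl; simp at hn; omega)
    have h1 := ih hy' (by omega)
    have h2 := hh y hy y' hy' hadj
    have := abs_sub_le (h x) (h y') (h y)
    rw [abs_sub_comm (h y')] at this
    omega

end Lattice

section Boundary

variable {d : ℕ}

lemma mem_ibdZ {S : Finset (Fin d → ℤ)} {x : Fin d → ℤ} :
    x ∈ ibdZ S ↔ x ∈ S ∧ ∃ y, y ∉ S ∧ adjZ x y := by
  classical
  rw [ibdZ, mem_filter]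

lemma mem_ibdZ_of_subset {S T : Finset (Fin d → ℤ)} (hST : S ⊆ T) {x : Fin d → ℤ} (hx : x ∈ S)
    (hxT : x ∈ ibdZ T) : x ∈ ibdZ S := by
  obtain ⟨-, y, hy, hxy⟩ := mem_ibdZ.mp hxT
  exact mem_ibdZ.mpr ⟨hx, y, fun hyS => hy (hST hyS), hxy⟩

lemma IsBoxZ.nonempty {B : Finset (Fin d → ℤ)} (hB : IsBoxZ B) : B.Nonempty := by
  obtain ⟨a, b, hab, rfl⟩ := hB
  exact ⟨a, Fintype.mem_piFinset.mpr fun i => left_mem_Ico.mpr (hab i)⟩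

lemma lower_corner_mem_ibdZ (hd : 0 < d) {a b : Fin d → ℤ} (hab : ∀ i, a i < b i) :
    a ∈ ibdZ (Fintype.piFinset fun i => Ico (a i) (b i)) := by
  refine mem_ibdZ.mpr ⟨Fintype.mem_piFinset.mpr fun i => left_mem_Ico.mpr (hab i),
    update a ⟨0, hd⟩ (a ⟨0, hd⟩ + -1), fun h => ?_, adjZ_update a _ (by simp)⟩
  simpa using Fintype.mem_piFinset.mp h ⟨0, hd⟩

lemma hgt.mono {S T : Finset (Fin d → ℤ)} {h : (Fin d → ℤ) → ℤ} (hh : hgt T h) (hST : S ⊆ T) :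
    hgt S h :=
  fun x hx y hy => hh x (hST hx) y (hST hy)

lemma ite_mem_Mset {S : Finset (Fin d → ℤ)} {h : (Fin d → ℤ) → ℤ} (hh : hgt S h) :
    (fun x => if x ∈ S then h x else 0) ∈ Mset S h :=
  ⟨fun x hx y hy hxy => by simpa [hx, hy] using hh x hx y hy hxy,
    fun x hx => if_pos (mem_ibdZ.mp hx).1, fun _ hx => if_neg hx⟩

/-- On a box of positive dimension the lower corner is a boundary vertex, so the Lipschitz bound
confines every configuration to finitely many values. -/
lemma Mset_finite (hd : 0 < d) {B : Finset (Fin d → ℤ)} (hB : IsBoxZ B)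
    (hb : (Fin d → ℤ) → ℤ) : (Mset B hb).Finite := by
  obtain ⟨a, b, hab, rfl⟩ := hB
  set box := Fintype.piFinset fun i => Ico (a i) (b i)
  set D := ∑ i, (b i - a i)
  have hbound : ∀ h ∈ Mset box hb, ∀ x ∈ box, h x ∈ Set.Icc (hb a - D) (hb a + D) := by
    rintro h ⟨hh, hbd, -⟩ x hx
    have hlip := abs_sub_le_of_hgt_box hh hx
      (Fintype.mem_piFinset.mpr fun i => left_mem_Ico.mpr (hab i))
    have hdist : ∑ i, |x i - a i| ≤ D := sum_le_sum fun i _ => by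
      have := mem_Ico.mp (Fintype.mem_piFinset.mp hx i)
      rw [abs_of_nonneg (by omega)]
      omega
    rw [hbd a (lower_corner_mem_ibdZ hd hab)] at hlip
    have := abs_le.mp (hlip.trans hdist)
    exact Set.mem_Icc.mpr ⟨by linarith [this.1], by linarith [this.2]⟩
  refine Set.Finite.of_finite_image (f := fun h (x : box) => h x)
    ((Set.Finite.pi fun _ => Set.finite_Icc (hb a - D) (hb a + D)).subset ?_) ?_
  · rintro _ ⟨h, hh, rfl⟩ x -
    exact hbound h hh x x.2
  · rintro h₁ ⟨-, -, hz₁⟩ h₂ ⟨-, -, hz₂⟩ heq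
    funext x
    by_cases hx : x ∈ box
    · exact congrFun heq ⟨x, hx⟩
    · rw [hz₁ x hx, hz₂ x hx]

end Boundary

section Gluing

variable {d : ℕ} {ι : Type*} [Fintype ι] {Bs : ι → Finset (Fin d → ℤ)}

def glue (Bs : ι → Finset (Fin d → ℤ)) (p : ι → (Fin d → ℤ) → ℤ) (x : Fin d → ℤ) : ℤ :=
  ∑ i, if x ∈ Bs i then p i x else 0

lemma glue_eq_of_mem (hdisj : Pairwise (Disjoint on Bs)) (p : ι → (Fin d → ℤ) → ℤ) {i : ι}
    {x : Fin d → ℤ} (hx : x ∈ Bs i) : glue Bs p x = p i x := by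
  rw [glue, sum_eq_single i (fun j _ hji => if_neg fun hxj =>
    disjoint_left.mp (hdisj hji) hxj hx) (fun hi => (hi (mem_univ i)).elim), if_pos hx]

lemma glue_eq_zero (p : ι → (Fin d → ℤ) → ℤ) {x : Fin d → ℤ} (hx : ∀ i, x ∉ Bs i) :
    glue Bs p x = 0 :=
  sum_eq_zero fun i _ => if_neg (hx i)

variable {B : Finset (Fin d → ℤ)}

/-- Across an edge joining two pieces both endpoints are boundary vertices of their pieces, where
all heights agree with `H₀`, which is a height function on `B`. -/
lemma glue_mem_Mset (hdisj : Pairwise (Disjoint on Bs)) (hunion : univ.biUnion Bs = B)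
    {H₀ : (Fin d → ℤ) → ℤ} (hH₀ : hgt B H₀) {p : ι → (Fin d → ℤ) → ℤ}
    (hp : ∀ i, p i ∈ Mset (Bs i) H₀) : glue Bs p ∈ Mset B H₀ := by
  have hsub : ∀ i, Bs i ⊆ B := fun i => hunion ▸ subset_biUnion_of_mem Bs (mem_univ i)
  have hcover : ∀ x ∈ B, ∃ i, x ∈ Bs i := fun x hx => by
    simpa [← hunion] using hx
  have hbd : ∀ i, ∀ x ∈ ibdZ (Bs i), glue Bs p x = H₀ x := fun i x hx => by
    rw [glue_eq_of_mem hdisj p (mem_ibdZ.mp hx).1]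
    exact (hp i).2.1 x hx
  refine ⟨fun x hx y hy hxy => ?_, fun x hx => ?_,
    fun x hx => glue_eq_zero p fun i hi => hx (hsub i hi)⟩
  · obtain ⟨i, hxi⟩ := hcover x hx
    obtain ⟨j, hyj⟩ := hcover y hy
    by_cases hyi : y ∈ Bs i
    · rw [glue_eq_of_mem hdisj p hxi, glue_eq_of_mem hdisj p hyi]
      exact (hp i).1 x hxi y hyi hxy
    · have hij : i ≠ j := by
        rintro rfl
        exact hyi hyj
      have hxj : x ∉ Bs j := disjoint_left.mp (hdisj hij) hxi
      rw [hbd i x (mem_ibdZ.mpr ⟨hxi, y, hyi, hxy⟩),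
        hbd j y (mem_ibdZ.mpr ⟨hyj, x, hxj, adjZ_comm.mp hxy⟩)]
      exact hH₀ x hx y hy hxy
  · obtain ⟨i, hxi⟩ := hcover x (mem_ibdZ.mp hx).1
    exact hbd i x (mem_ibdZ_of_subset (hsub i) hxi hx)

lemma glue_injective (hdisj : Pairwise (Disjoint on Bs)) (hb : (Fin d → ℤ) → ℤ) :
    Injective fun p : ∀ i, Mset (Bs i) hb => glue Bs fun i => (p i).1 := by
  intro p q hpq
  funext i
  refine Subtype.ext (funext fun x => ?_)
  by_cases hx : x ∈ Bs i
  · simpa only [glue_eq_of_mem hdisj _ hx] using congrFun hpq x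
  · rw [(p i).2.2.2 x hx, (q i).2.2.2 x hx]

end Gluing

section Hamiltonian

variable {d : ℕ}

noncomputable def adjPairs (S : Finset (Fin d → ℤ)) : Finset ((Fin d → ℤ) × (Fin d → ℤ)) :=
  @Finset.filter _ (fun q => adjZ q.1 q.2) (Classical.decPred _) (S ×ˢ S)

lemma mem_adjPairs {S : Finset (Fin d → ℤ)} {q : (Fin d → ℤ) × (Fin d → ℤ)} :
    q ∈ adjPairs S ↔ (q.1 ∈ S ∧ q.2 ∈ S) ∧ adjZ q.1 q.2 := by
  classical
  rw [adjPairs, mem_filter, mem_product]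

lemma ham_eq_sum_adjPairs (w : ℤ → ℝ) (S : Finset (Fin d → ℤ)) (h : (Fin d → ℤ) → ℤ) :
    ham w S h = 1 / 2 * ∑ q ∈ adjPairs S, w (min (h q.1) (h q.2)) :=
  rfl

lemma ham_congr (w : ℤ → ℝ) {S : Finset (Fin d → ℤ)} {h h' : (Fin d → ℤ) → ℤ}
    (hh : ∀ x ∈ S, h x = h' x) : ham w S h = ham w S h' := by
  simp only [ham_eq_sum_adjPairs]
  congr 1
  refine sum_congr rfl fun q hq => ?_
  obtain ⟨⟨h₁, h₂⟩, -⟩ := mem_adjPairs.mp hq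
  rw [hh _ h₁, hh _ h₂]

variable {ι : Type*} [Fintype ι] {Bs : ι → Finset (Fin d → ℤ)} {B : Finset (Fin d → ℤ)}

lemma card_adjPairs_sdiff_le (hcover : B ⊆ univ.biUnion Bs) :
    #(adjPairs B \ univ.biUnion fun i => adjPairs (Bs i)) ≤ 2 * d * ∑ i, #(ibdZ (Bs i)) := by
  classical
  calc _ ≤ #(univ.biUnion fun i => (ibdZ (Bs i)).biUnion fun x => (nbrs x).image (Prod.mk x)) := by
        refine card_le_card fun q hq => ?_
        obtain ⟨hqB, hqQ⟩ := mem_sdiff.mp hq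
        obtain ⟨⟨h₁, -⟩, hadj⟩ := mem_adjPairs.mp hqB
        obtain ⟨i, -, hi⟩ := mem_biUnion.mp (hcover h₁)
        have h₂ : q.2 ∉ Bs i := fun h₂ =>
          hqQ (mem_biUnion.mpr ⟨i, mem_univ i, mem_adjPairs.mpr ⟨⟨hi, h₂⟩, hadj⟩⟩)
        exact mem_biUnion.mpr ⟨i, mem_univ i, mem_biUnion.mpr
          ⟨q.1, mem_ibdZ.mpr ⟨hi, q.2, h₂, hadj⟩, mem_image.mpr ⟨q.2, mem_nbrs_of_adjZ hadj, rfl⟩⟩⟩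
    _ ≤ ∑ i, ∑ x ∈ ibdZ (Bs i), #(nbrs x) :=
        card_biUnion_le.trans (sum_le_sum fun i _ =>
          card_biUnion_le.trans (sum_le_sum fun x _ => card_image_le))
    _ ≤ ∑ i, ∑ _x ∈ ibdZ (Bs i), 2 * d := by
        gcongr with i _ x _
        exact card_nbrs_le x
    _ = 2 * d * ∑ i, #(ibdZ (Bs i)) := by simp [mul_sum, mul_comm]

lemma sum_ham_sub_le_ham_glue (hdisj : Pairwise (Disjoint on Bs)) (hunion : univ.biUnion Bs = B)
    {w : ℤ → ℝ} {C : ℝ} (hw : ∀ a, |w a| ≤ C) (p : ι → (Fin d → ℤ) → ℤ) :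
    ∑ i, ham w (Bs i) (p i) - d * C * ∑ i, (#(ibdZ (Bs i)) : ℝ) ≤ ham w B (glue Bs p) := by
  classical
  set f : (Fin d → ℤ) × (Fin d → ℤ) → ℝ := fun q => w (min (glue Bs p q.1) (glue Bs p q.2))
  set Q := univ.biUnion fun i => adjPairs (Bs i)
  have hQ : Q ⊆ adjPairs B := biUnion_subset.mpr fun i _ q hq => by
    obtain ⟨⟨h₁, h₂⟩, hadj⟩ := mem_adjPairs.mp hq
    have hsub : Bs i ⊆ B := hunion ▸ subset_biUnion_of_mem Bs (mem_univ i)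
    exact mem_adjPairs.mpr ⟨⟨hsub h₁, hsub h₂⟩, hadj⟩
  have hpieces : ∑ q ∈ Q, f q = 2 * ∑ i, ham w (Bs i) (p i) := by
    rw [sum_biUnion fun i _ j _ hij => disjoint_left.mpr fun q hi hj =>
      disjoint_left.mp (hdisj hij) (mem_adjPairs.mp hi).1.1 (mem_adjPairs.mp hj).1.1, mul_sum]
    refine sum_congr rfl fun i _ => ?_
    rw [ham_congr w fun x hx => (glue_eq_of_mem hdisj p hx).symm, ham_eq_sum_adjPairs]
    ring
  have hcross : -(#(adjPairs B \ Q) * C) ≤ ∑ q ∈ adjPairs B \ Q, f q := by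
    simpa using card_nsmul_le_sum (adjPairs B \ Q) f (-C) fun q _ => neg_le_of_abs_le (hw _)
  have hcard : (#(adjPairs B \ Q) : ℝ) ≤ 2 * d * ∑ i, (#(ibdZ (Bs i)) : ℝ) := by
    exact_mod_cast card_adjPairs_sdiff_le hunion.ge
  have hC : 0 ≤ C := (abs_nonneg _).trans (hw 0)
  rw [ham_eq_sum_adjPairs, ← sum_sdiff hQ]
  nlinarith [mul_le_mul_of_nonneg_left hcard hC]

end Hamiltonian

/-- Expanding `∏ᵢ Σ exp fᵢ` into a sum over tuples and injecting the tuples into `β` gives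
`e^{-E} ∏ᵢ Zᵢ ≤ Z`. -/
lemma sum_log_tsum_exp_sub_le {ι : Type*} [Fintype ι] {α : ι → Type*} [∀ i, Finite (α i)]
    [∀ i, Nonempty (α i)] {β : Type*} [Finite β] (f : ∀ i, α i → ℝ) (g : β → ℝ) (E : ℝ)
    {G : (∀ i, α i) → β} (hG : Injective G) (hfg : ∀ p, ∑ i, f i (p i) - E ≤ g (G p)) :
    ∑ i, Real.log (∑' a, Real.exp (f i a)) - E ≤ Real.log (∑' b, Real.exp (g b)) := by
  classical
  have := Fintype.ofFinite β
  have := fun i => Fintype.ofFinite (α i)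
  simp only [tsum_fintype]
  have hpos : ∀ i, 0 < ∑ a, Real.exp (f i a) := fun i =>
    sum_pos (fun _ _ => Real.exp_pos _) univ_nonempty
  have key : Real.exp (-E) * ∏ i, ∑ a, Real.exp (f i a) ≤ ∑ b, Real.exp (g b) :=
    calc Real.exp (-E) * ∏ i, ∑ a, Real.exp (f i a)
        = ∑ p : ∀ i, α i, Real.exp (∑ i, f i (p i) - E) := by
          simp only [Fintype.prod_sum, mul_sum, Real.exp_sum, Real.exp_sub, Real.exp_neg]
          ring_nf
      _ ≤ ∑ p : ∀ i, α i, Real.exp (g (G p)) := sum_le_sum fun p _ => Real.exp_le_exp.mpr (hfg p)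
      _ = ∑ b ∈ univ.image G, Real.exp (g b) := by
          rw [sum_image fun p _ q _ h => hG h]
      _ ≤ ∑ b, Real.exp (g b) :=
          sum_le_sum_of_subset_of_nonneg (subset_univ _) fun b _ _ => (Real.exp_pos _).le
  have hprod := prod_pos fun i (_ : i ∈ univ) => hpos i
  have := Real.log_le_log (mul_pos (Real.exp_pos _) hprod) key
  rwa [Real.log_mul (Real.exp_pos _).ne' hprod.ne', Real.log_exp,
    Real.log_prod fun i _ => (hpos i).ne', neg_add_eq_sub] at this

/-- In dimension `0` there are no edges and no boundary, so every function is a configuration with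
zero energy, and the divergent sum defining `Zfn` takes the junk value `0`. -/
lemma Zfn_eq_zero_of_dim_zero (w : ℤ → ℝ) {B : Finset (Fin 0 → ℤ)} (hB : B.Nonempty)
    (hb : (Fin 0 → ℤ) → ℤ) : Zfn w B hb = 0 := by
  have hnadj : ∀ x y : Fin 0 → ℤ, ¬ adjZ x y := by simp [adjZ]
  obtain ⟨x₀, hx₀⟩ := hB
  have hmem : ∀ x, x ∈ B := fun x => Subsingleton.elim x₀ x ▸ hx₀
  have hM : Mset B hb = Set.univ := Set.eq_univ_of_forall fun h =>
    ⟨fun x _ y _ hxy => (hnadj x y hxy).elim,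
      fun x hx => (mem_ibdZ.mp hx).2.elim fun y hy => (hy.1 (hmem y)).elim,
      fun x hx => (hx (hmem x)).elim⟩
  have hham : ∀ h, ham w B h = 0 := fun h => by
    rw [ham_eq_sum_adjPairs, sum_eq_zero fun q hq => (hnadj _ _ (mem_adjPairs.mp hq).2).elim,
      mul_zero]
  have : Infinite (Mset B hb) := hM ▸ Set.infinite_univ.to_subtype
  simp [Zfn, hham, tsum_const, Nat.card_eq_zero_of_infinite]

/-- **Almost superadditivity of the log-partition function**: if a box `B` is partitioned
into disjoint boxes `B₁,…,B_k` with boundary data induced by a common height function `H₀`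
on `B`, and `|ω_e| ≤ C`, then `F_B ≥ Σ_i F_{B_i} − d·C·Σ_i |∂B_i|`, where
`F_B = ln Z_{B,h_∂B,ω}`. -/
theorem logZ_almost_superadditive (d k : ℕ) (B : Finset (Fin d → ℤ))
    (Bs : Fin k → Finset (Fin d → ℤ))
    (hB : IsBoxZ B) (hBs : ∀ i, IsBoxZ (Bs i))
    (hdisj : ∀ i j, i ≠ j → Disjoint (Bs i) (Bs j))
    (hunion : Finset.univ.biUnion Bs = B)
    (H₀ : (Fin d → ℤ) → ℤ) (hH₀ : hgt B H₀)
    (w : ℤ → ℝ) (C : ℝ) (hw : ∀ a : ℤ, |w a| ≤ C) :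
    (∑ i, Real.log (Zfn w (Bs i) H₀)) - (d : ℝ) * C * ∑ i, ((ibdZ (Bs i)).card : ℝ)
      ≤ Real.log (Zfn w B H₀) := by
  rcases Nat.eq_zero_or_pos d with rfl | hd
  · simp only [Zfn_eq_zero_of_dim_zero w hB.nonempty, Zfn_eq_zero_of_dim_zero w (hBs _).nonempty,
      Real.log_zero, sum_const_zero, CharP.cast_eq_zero, zero_mul, sub_zero, le_refl]
  have hsub : ∀ i, Bs i ⊆ B := fun i => hunion ▸ subset_biUnion_of_mem Bs (mem_univ i)
  have := (Mset_finite hd hB H₀).to_subtype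
  have := fun i => (Mset_finite hd (hBs i) H₀).to_subtype
  have := fun i => Nonempty.intro (α := Mset (Bs i) H₀) ⟨_, ite_mem_Mset (hH₀.mono (hsub i))⟩
  let G : (∀ i, Mset (Bs i) H₀) → Mset B H₀ := fun p =>
    ⟨glue Bs fun i => (p i).1, glue_mem_Mset hdisj hunion hH₀ fun i => (p i).2⟩
  have hG : Injective G := fun p q hpq => glue_injective hdisj H₀ (congrArg Subtype.val hpq)
  exact sum_log_tsum_exp_sub_le (fun i (h : Mset (Bs i) H₀) => ham w (Bs i) h.1)
    (fun h : Mset B H₀ => ham w B h.1) _ hG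
    fun p => sum_ham_sub_le_ham_glue hdisj hunion hw fun i => (p i).1
end

section
/- (Discrete Kirszbraun theorem for Z-valued height functions.) Let Λ ⊆ Z^m and let g : Λ → Z satisfy |g(x) − g(y)| ≤ |x−y|_{l^1} and g(x) − g(y) ≡ |x−y|_{l^1} (mod 2) for all x,y ∈ Λ. Then g extends to a height function h : Z^m → Z (i.e., |h(x)−h(y)| = 1 for adjacent x,y) with h|_Λ = g. -/
open Filter

/-!
The McShane extension `h x = min_{y ∈ Λ} (g y + |x - y|₁)` is 1-Lipschitz for the `l¹`-distance
and agrees with `g` on `Λ`. Since `|x - y|₁ ≡ Σ xᵢ - Σ yᵢ (mod 2)`, the parity condition makes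
`g x - Σ xᵢ` constant mod 2 on `Λ`, and then `h x - Σ xᵢ` is the same constant everywhere. So the
values of `h` at neighbours differ by an odd integer of absolute value at most 1.
-/

section McShane

variable {α : Type*} {d : α → α → ℤ} {Λ : Set α} {g : α → ℤ}

noncomputable def mcShaneExt (d : α → α → ℤ) (Λ : Set α) (g : α → ℤ) (x : α) : ℤ :=
  sInf ((fun y => g y + d x y) '' Λ)

lemma bddBelow_mcShane_image (htri : ∀ x y z, d x z ≤ d x y + d y z)
    (hlip : ∀ x ∈ Λ, ∀ y ∈ Λ, g x - g y ≤ d x y) (hΛ : Λ.Nonempty) (x : α) :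
    BddBelow ((fun y => g y + d x y) '' Λ) := by
  obtain ⟨x₀, hx₀⟩ := hΛ
  refine ⟨g x₀ - d x₀ x, ?_⟩
  rintro _ ⟨y, hy, rfl⟩
  linarith [hlip x₀ hx₀ y hy, htri x₀ x y]

lemma mcShaneExt_le (htri : ∀ x y z, d x z ≤ d x y + d y z)
    (hlip : ∀ x ∈ Λ, ∀ y ∈ Λ, g x - g y ≤ d x y) {x y : α} (hy : y ∈ Λ) :
    mcShaneExt d Λ g x ≤ g y + d x y :=
  csInf_le (bddBelow_mcShane_image htri hlip ⟨y, hy⟩ x) (Set.mem_image_of_mem _ hy)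

lemma mcShaneExt_le_add (htri : ∀ x y z, d x z ≤ d x y + d y z)
    (hlip : ∀ x ∈ Λ, ∀ y ∈ Λ, g x - g y ≤ d x y) (hΛ : Λ.Nonempty) (x z : α) :
    mcShaneExt d Λ g x ≤ mcShaneExt d Λ g z + d x z := by
  rw [← sub_le_iff_le_add]
  refine le_csInf (hΛ.image _) ?_
  rintro _ ⟨y, hy, rfl⟩
  linarith [mcShaneExt_le htri hlip (x := x) hy, htri x z y]

lemma mcShaneExt_eq_of_mem (htri : ∀ x y z, d x z ≤ d x y + d y z)
    (hlip : ∀ x ∈ Λ, ∀ y ∈ Λ, g x - g y ≤ d x y) {x : α} (hself : d x x = 0) (hx : x ∈ Λ) :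
    mcShaneExt d Λ g x = g x := by
  refine le_antisymm ?_ (le_csInf (Set.Nonempty.image _ ⟨x, hx⟩) ?_)
  · simpa [hself] using mcShaneExt_le htri hlip (x := x) hx
  · rintro _ ⟨y, hy, rfl⟩
    linarith [hlip x hx y hy]

lemma exists_mcShaneExt_eq (htri : ∀ x y z, d x z ≤ d x y + d y z)
    (hlip : ∀ x ∈ Λ, ∀ y ∈ Λ, g x - g y ≤ d x y) (hΛ : Λ.Nonempty) (x : α) :
    ∃ y ∈ Λ, mcShaneExt d Λ g x = g y + d x y := by
  obtain ⟨y, hy, hyx⟩ := Int.csInf_mem (hΛ.image _) (bddBelow_mcShane_image htri hlip hΛ x)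
  exact ⟨y, hy, hyx.symm⟩

lemma mcShaneExt_sub_modEq (htri : ∀ x y z, d x z ≤ d x y + d y z)
    (hlip : ∀ x ∈ Λ, ∀ y ∈ Λ, g x - g y ≤ d x y) (hΛ : Λ.Nonempty) {π : α → ℤ} {n : ℤ}
    (hdπ : ∀ x y, d x y ≡ π x - π y [ZMOD n])
    (hpar : ∀ x ∈ Λ, ∀ y ∈ Λ, g x - g y ≡ d x y [ZMOD n]) (x z : α) :
    mcShaneExt d Λ g x - mcShaneExt d Λ g z ≡ d x z [ZMOD n] := by
  obtain ⟨y, hy, hxy⟩ := exists_mcShaneExt_eq htri hlip hΛ x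
  obtain ⟨y', hy', hzy'⟩ := exists_mcShaneExt_eq htri hlip hΛ z
  calc mcShaneExt d Λ g x - mcShaneExt d Λ g z = (g y - g y') + d x y - d z y' := by
        rw [hxy, hzy']; ring
    _ ≡ (π y - π y') + (π x - π y) - (π z - π y') [ZMOD n] :=
        (((hpar y hy y' hy').trans (hdπ y y')).add (hdπ x y)).sub (hdπ z y')
    _ = π x - π z := by ring
    _ ≡ d x z [ZMOD n] := (hdπ x z).symm

end McShane

section L1Distance

variable {m : ℕ}

def l1dist (x y : Fin m → ℤ) : ℤ := ∑ i, |x i - y i|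

lemma l1dist_self (x : Fin m → ℤ) : l1dist x x = 0 := by simp [l1dist]

lemma l1dist_comm (x y : Fin m → ℤ) : l1dist x y = l1dist y x :=
  Finset.sum_congr rfl fun _ _ => abs_sub_comm _ _

lemma l1dist_triangle (x y z : Fin m → ℤ) : l1dist x z ≤ l1dist x y + l1dist y z := by
  rw [l1dist, l1dist, l1dist, ← Finset.sum_add_distrib]
  exact Finset.sum_le_sum fun i _ => abs_sub_le (x i) (y i) (z i)

lemma l1dist_modEq_two (x y : Fin m → ℤ) : l1dist x y ≡ ∑ i, x i - ∑ i, y i [ZMOD 2] := by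
  rw [l1dist, ← Finset.sum_sub_distrib]
  refine Int.ModEq.sum fun i _ => ?_
  rcases abs_cases (x i - y i) with ⟨h, -⟩ | ⟨h, -⟩ <;> unfold Int.ModEq <;> omega

end L1Distance

theorem exists_height_extension_of_nonempty {m : ℕ} {Λ : Set (Fin m → ℤ)} {g : (Fin m → ℤ) → ℤ}
    (hΛ : Λ.Nonempty) (hlip : ∀ x ∈ Λ, ∀ y ∈ Λ, |g x - g y| ≤ l1dist x y)
    (hpar : ∀ x ∈ Λ, ∀ y ∈ Λ, g x - g y ≡ l1dist x y [ZMOD 2]) :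
    ∃ h : (Fin m → ℤ) → ℤ,
      (∀ x y : Fin m → ℤ, adjZ x y → |h x - h y| = 1) ∧ ∀ x ∈ Λ, h x = g x := by
  have hlip' : ∀ x ∈ Λ, ∀ y ∈ Λ, g x - g y ≤ l1dist x y :=
    fun x hx y hy => (le_abs_self _).trans (hlip x hx y hy)
  refine ⟨mcShaneExt l1dist Λ g, fun x y hxy => ?_,
    fun x hx => mcShaneExt_eq_of_mem l1dist_triangle hlip' (l1dist_self x) hx⟩
  have hxy : l1dist x y = 1 := hxy
  have hxy_le := mcShaneExt_le_add l1dist_triangle hlip' hΛ x y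
  have hyx_le := mcShaneExt_le_add l1dist_triangle hlip' hΛ y x
  have hodd := mcShaneExt_sub_modEq l1dist_triangle hlip' hΛ l1dist_modEq_two hpar x y
  rw [l1dist_comm y x] at hyx_le
  rw [hxy] at hxy_le hyx_le hodd
  unfold Int.ModEq at hodd
  rw [abs_eq zero_le_one]
  omega

/-- **Discrete Kirszbraun theorem for `ℤ`-valued height functions**: if `g : Λ → ℤ`
(`Λ ⊆ ℤ^m`) satisfies `|g(x) − g(y)| ≤ |x−y|₁` and `g(x) − g(y) ≡ |x−y|₁ (mod 2)` for all
`x, y ∈ Λ`, then `g` extends to a height function `h : ℤ^m → ℤ`. -/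
theorem discrete_kirszbraun (m : ℕ) (Λ : Set (Fin m → ℤ)) (g : (Fin m → ℤ) → ℤ)
    (hlip : ∀ x ∈ Λ, ∀ y ∈ Λ, |g x - g y| ≤ ∑ i, |x i - y i|)
    (hpar : ∀ x ∈ Λ, ∀ y ∈ Λ, g x - g y ≡ (∑ i, |x i - y i|) [ZMOD 2]) :
    ∃ h : (Fin m → ℤ) → ℤ,
      (∀ x y : Fin m → ℤ, adjZ x y → |h x - h y| = 1) ∧ ∀ x ∈ Λ, h x = g x := by
  rcases Λ.eq_empty_or_nonempty with rfl | hΛ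
  · obtain ⟨h, hh, -⟩ := exists_height_extension_of_nonempty (g := 0)
      (Set.singleton_nonempty (0 : Fin m → ℤ)) (by simp [l1dist]) (by simp [l1dist, Int.ModEq])
    exact ⟨h, hh, by simp⟩
  · exact exists_height_extension_of_nonempty hΛ hlip hpar
end

section
/- Fix a slope s ∈ R^m with |s|_∞ < 1 and set C = 2/(1 − |s|_∞). Let n' = n + ⌈Cδn⌉ for δ > 0. Let h_n : S_n → Z be a height function with |h_n(x) − ⌊s·x⌋| ≤ δn for all x ∈ ∂S_n, and let h_{∂S_{n'}} be a boundary height function on ∂S_{n'} with |h_{∂S_{n'}}(y) − ⌊s·y⌋| ≤ 1 for all y ∈ ∂S_{n'}. Then for n sufficiently large, for all x ∈ ∂S_n and y ∈ ∂S_{n'}: |h_n(x) − h_{∂S_{n'}}(y)| ≤ |x − y|_{l^1}. -/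
open Filter

/-- `⌊s·x⌋`, the floor of the linear function of slope `s`. -/
noncomputable def floorSlope {d : ℕ} (s : Fin d → ℝ) (x : Fin d → ℤ) : ℤ :=
  ⌊∑ i, s i * (x i : ℝ)⌋

/-! The linear function `x ↦ s·x` is `K`-Lipschitz for the `l¹` distance, so its floor is
`K`-Lipschitz up to an additive error `1`. Hence `|h_n(x) − h'(y)|` is at most
`δn + K|x−y|₁ + 2`, and this is at most `|x−y|₁` as soon as `(1 − K)|x−y|₁ ≥ 2δn ≥ δn + 2`,
i.e. once `n ≥ 2/δ`. -/

open Finset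

theorem abs_floor_sub_floor_lt {R : Type*} [CommRing R] [LinearOrder R] [IsStrictOrderedRing R]
    [FloorRing R] (a b : R) :
    |(⌊a⌋ - ⌊b⌋ : R)| < |a - b| + 1 := by
  have := Int.floor_le a
  have := Int.floor_le b
  have := Int.sub_one_lt_floor a
  have := Int.sub_one_lt_floor b
  rw [abs_sub_lt_iff]
  constructor <;> linarith [le_abs_self (a - b), neg_abs_le (a - b)]

theorem abs_sum_mul_sub_sum_mul_le {ι : Type*} [Fintype ι] {s : ι → ℝ} {K : ℝ}
    (hK : ∀ i, |s i| ≤ K) (a b : ι → ℝ) :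
    |∑ i, s i * a i - ∑ i, s i * b i| ≤ K * ∑ i, |a i - b i| := by
  rw [← sum_sub_distrib, mul_sum]
  refine (abs_sum_le_sum_abs _ _).trans (sum_le_sum fun i _ => ?_)
  rw [← mul_sub, abs_mul]
  exact mul_le_mul_of_nonneg_right (hK i) (abs_nonneg _)

theorem abs_floorSlope_sub_floorSlope_le {m : ℕ} {s : Fin m → ℝ} {K : ℝ}
    (hK : ∀ i, |s i| ≤ K) (x y : Fin m → ℤ) :
    |(floorSlope s x : ℝ) - floorSlope s y| ≤ K * ((∑ i, |x i - y i| : ℤ) : ℝ) + 1 := by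
  have hlin := abs_sum_mul_sub_sum_mul_le hK (fun i => (x i : ℝ)) (fun i => (y i : ℝ))
  push_cast
  exact (abs_floor_sub_floor_lt _ _).le.trans (by simpa using hlin)

theorem kirszbraun_compatibility_general (m : ℕ) (s : Fin m → ℝ) (K : ℝ)
    (hK : ∀ i, |s i| ≤ K) (hK1 : K < 1)
    (δ : ℝ) (hδ : 0 < δ) :
    ∃ N : ℕ, ∀ n ≥ N,
      ∀ (hn h' : (Fin m → ℤ) → ℤ),
        hgt (cubeZ m n) hn →
        (∀ x ∈ ibdZ (cubeZ m n), (|hn x - floorSlope s x| : ℝ) ≤ δ * n) →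
        (∀ y ∈ ibdZ (cubeZ m (n + ⌈2 / (1 - K) * δ * n⌉₊)),
          |h' y - floorSlope s y| ≤ 1) →
        ∀ x ∈ ibdZ (cubeZ m n), ∀ y ∈ ibdZ (cubeZ m (n + ⌈2 / (1 - K) * δ * n⌉₊)),
          ((n + ⌈2 / (1 - K) * δ * n⌉₊ : ℤ) - (n : ℤ) ≤ ∑ i, |x i - y i|) →
          |hn x - h' y| ≤ ∑ i, |x i - y i| := by
  refine ⟨⌈2 / δ⌉₊, fun n hnN hn h' _ hbd hbd' x hx y hy hD => ?_⟩
  set D : ℤ := ∑ i, |x i - y i|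
  have hδn : 2 ≤ δ * n := by
    have h2δ : 2 / δ ≤ n := Nat.ceil_le.mp hnN
    rwa [div_le_iff₀ hδ, mul_comm] at h2δ
  have hgap : 2 / (1 - K) * δ * n ≤ (D : ℝ) :=
    (Nat.le_ceil _).trans (by exact_mod_cast (by omega : (_ : ℤ) ≤ D))
  have hgap' : 2 * (δ * n) ≤ (1 - K) * D := by
    rwa [mul_assoc, div_mul_eq_mul_div, div_le_iff₀' (by linarith)] at hgap
  have hx' := hbd x hx
  have hy' : (|h' y - floorSlope s y| : ℝ) ≤ 1 := by exact_mod_cast hbd' y hy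
  have hxy : |(floorSlope s x : ℝ) - floorSlope s y| ≤ K * D + 1 :=
    abs_floorSlope_sub_floorSlope_le hK x y
  have htri : (|hn x - h' y| : ℝ) ≤ |(hn x : ℝ) - floorSlope s x|
      + |(floorSlope s x : ℝ) - floorSlope s y| + |(h' y : ℝ) - floorSlope s y| := by
    rw [abs_sub_comm (h' y : ℝ)]
    exact (abs_sub_le _ (floorSlope s y : ℝ) _).trans (add_le_add (abs_sub_le _ _ _) le_rfl)
  have hreal : (|hn x - h' y| : ℝ) ≤ D := by linarith
  exact_mod_cast hreal

/-- **Lipschitz compatibility for the Kirszbraun step**: fix a slope `s` with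
`|s|_∞ ≤ K < 1` and set `C = 2/(1−K)`, `n' = n + ⌈Cδn⌉`. If `h_n` is a height function on
`S_n` with `|h_n(x) − ⌊s·x⌋| ≤ δn` on `∂S_n`, and `h'` is boundary data on `∂S_{n'}` with
`|h'(y) − ⌊s·y⌋| ≤ 1`, then for `n` sufficiently large, all `x ∈ ∂S_n`, `y ∈ ∂S_{n'}`
(which satisfy `|x−y|₁ ≥ n' − n`): `|h_n(x) − h'(y)| ≤ |x−y|₁`. -/
theorem kirszbraun_compatibility (m : ℕ) (s : Fin m → ℝ) (K : ℝ)
    (hK : ∀ i, |s i| ≤ K) (hK0 : 0 ≤ K) (hK1 : K < 1)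
    (δ : ℝ) (hδ : 0 < δ) :
    ∃ N : ℕ, ∀ n ≥ N,
      ∀ (hn h' : (Fin m → ℤ) → ℤ),
        hgt (cubeZ m n) hn →
        (∀ x ∈ ibdZ (cubeZ m n), (|hn x - floorSlope s x| : ℝ) ≤ δ * n) →
        (∀ y ∈ ibdZ (cubeZ m (n + ⌈2 / (1 - K) * δ * n⌉₊)),
          |h' y - floorSlope s y| ≤ 1) →
        ∀ x ∈ ibdZ (cubeZ m n), ∀ y ∈ ibdZ (cubeZ m (n + ⌈2 / (1 - K) * δ * n⌉₊)),
          ((n + ⌈2 / (1 - K) * δ * n⌉₊ : ℤ) - (n : ℤ) ≤ ∑ i, |x i - y i|) →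
          |hn x - h' y| ≤ ∑ i, |x i - y i| :=
  kirszbraun_compatibility_general m s K hK hK1 δ hδ
end
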